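/- arXiv:0907.1821 — 8 statements merged into one kernel-verified Lean document; each statement's English description precedes it below -/
import Mathlib

section
/- Let u : ℕ → ℝ → ℝ be the family of functions defined for t < 1 by u₀(t) = t/(1−t) and the recursion u_{j+1}(t) = −u_j(t)/u_j(t−1). Then for every n ≥ 1 and every real t < 1, u_{n−1}(t) = t · ∏_{k=1}^{n} (k−t)^{(−1)^k · C(n,k)}, where the exponent (−1)^k · C(n,k) is an integer and each base k−t is positive. -/
/-!
Write `P_n(t) = ∏_{k=1}^n (k - t)^((-1)^k C(n,k))`. Pascal's rule `C(n+1,k) = C(n,k) + C(n,k-1)`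
gives `P_{n+1}(t) = P_n(t) / ((1 - t) P_n(t - 1))`, the terms with `C(n,k-1)` forming the shifted
product since `k - t = (k - 1) - (t - 1)`. Hence `t P_{n+1}(t)` obeys the recursion of `u_n`, with
the right initial value `t / (1 - t)`, and the theorem follows by induction on `n`.
-/

open Finset

section AltBinomialProd

variable {G₀ : Type*} [CommGroupWithZero G₀]

def altBinomialProd (n : ℕ) (f : ℕ → G₀) : G₀ :=
  ∏ k ∈ Icc 1 n, f k ^ ((-1 : ℤ) ^ k * (n.choose k : ℤ))

lemma altBinomialProd_eq_prod_range (n : ℕ) (f : ℕ → G₀) :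
    altBinomialProd n f =
      ∏ k ∈ range n, f (k + 1) ^ ((-1 : ℤ) ^ (k + 1) * (n.choose (k + 1) : ℤ)) := by
  rw [altBinomialProd, ← Ico_add_one_right_eq_Icc, prod_Ico_eq_prod_range, Nat.add_sub_cancel]
  simp only [add_comm 1]

lemma altBinomialProd_succ (n : ℕ) {f : ℕ → G₀} (hf : ∀ k, f (k + 1) ≠ 0) :
    altBinomialProd (n + 1) f =
      (f 1)⁻¹ * altBinomialProd n f / altBinomialProd n (fun k ↦ f (k + 1)) := by
  have pascal : ∀ k ∈ range (n + 1),
      f (k + 1) ^ ((-1 : ℤ) ^ (k + 1) * ((n + 1).choose (k + 1) : ℤ)) =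
        f (k + 1) ^ ((-1 : ℤ) ^ (k + 1) * (n.choose (k + 1) : ℤ)) *
          (f (k + 1) ^ ((-1 : ℤ) ^ k * (n.choose k : ℤ)))⁻¹ := by
    intro k _
    rw [← zpow_neg, ← zpow_add₀ (hf k), Nat.choose_succ_succ']
    congr 1
    push_cast
    ring
  rw [altBinomialProd_eq_prod_range, prod_congr rfl pascal, prod_mul_distrib, prod_inv_distrib,
    prod_range_succ, prod_range_succ', altBinomialProd_eq_prod_range,
    altBinomialProd_eq_prod_range n (fun k ↦ f (k + 1))]
  simp only [Nat.choose_succ_self, Nat.choose_zero_right, Nat.cast_zero, mul_zero, zpow_zero,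
    mul_one, zero_add, pow_zero, Nat.cast_one, zpow_one, mul_inv, div_eq_mul_inv]
  simp only [mul_comm, mul_left_comm, mul_assoc]

end AltBinomialProd

lemma mul_altBinomialProd_succ_sub (n : ℕ) {t : ℝ} (ht : t < 1) :
    t * altBinomialProd (n + 1) (fun k ↦ (k : ℝ) - t) =
      -(t * altBinomialProd n (fun k ↦ (k : ℝ) - t)) /
        ((t - 1) * altBinomialProd n (fun k ↦ (k : ℝ) - (t - 1))) := by
  have hne : ∀ k : ℕ, ((k + 1 : ℕ) : ℝ) - t ≠ 0 := fun k ↦ by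
    have := k.cast_nonneg (α := ℝ)
    push_cast
    linarith
  have hshift : (fun k : ℕ ↦ ((k + 1 : ℕ) : ℝ) - t) = fun k : ℕ ↦ (k : ℝ) - (t - 1) := by
    funext k
    push_cast
    ring
  have hinv : (t - 1)⁻¹ = -(1 - t)⁻¹ := by rw [← inv_neg, neg_sub]
  rw [altBinomialProd_succ n hne, hshift, Nat.cast_one, div_eq_mul_inv, div_eq_mul_inv, mul_inv,
    hinv]
  ring

/-- If `u : ℕ → ℝ → ℝ` satisfies `u 0 t = t/(1-t)` and the recursion
`u (j+1) t = - u j t / u j (t-1)` for all `t < 1`, then for every `n ≥ 1` and `t < 1`,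
`u (n-1) t = t * ∏_{k=1}^{n} (k - t) ^ ((-1)^k * C(n,k))` (integer power of positive base). -/
theorem forest_fire_u_formula
    (u : ℕ → ℝ → ℝ)
    (h0 : ∀ t : ℝ, t < 1 → u 0 t = t / (1 - t))
    (hrec : ∀ j : ℕ, ∀ t : ℝ, t < 1 → u (j + 1) t = - u j t / u j (t - 1)) :
    ∀ n : ℕ, 1 ≤ n → ∀ t : ℝ, t < 1 →
      u (n - 1) t =
        t * ∏ k ∈ Finset.Icc 1 n, ((k : ℝ) - t) ^ ((-1 : ℤ) ^ k * (n.choose k : ℤ)) := by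
  have closed_form : ∀ m t, t < 1 → u m t = t * altBinomialProd (m + 1) (fun k ↦ (k : ℝ) - t) := by
    intro m
    induction m with
    | zero =>
      intro t ht
      simp [h0 t ht, altBinomialProd, div_eq_mul_inv]
    | succ m ih =>
      intro t ht
      rw [hrec m t ht, ih t ht, ih (t - 1) (by linarith), mul_altBinomialProd_succ_sub (m + 1) ht]
  intro n hn t ht
  obtain ⟨m, rfl⟩ := Nat.exists_eq_add_of_le' hn
  exact closed_form m t ht
end

section
/- For all integers n ≥ 1 and m ≥ 1, a(n,m) = ∑_{1 ≤ i₁ ≤ i₂ ≤ ⋯ ≤ i_m ≤ n} 1/(i₁ i₂ ⋯ i_m), where the sum is over all nondecreasing m-tuples of integers between 1 and n. -/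
open Finset

noncomputable def Lf (m n : ℕ) : ℝ :=
  ∑ k ∈ Finset.Icc 1 n, (n.choose k : ℝ) * (-1 : ℝ) ^ (k + 1) / (k : ℝ) ^ m

noncomputable def Rf (m n : ℕ) : ℝ :=
  ∑ f ∈ (Fintype.piFinset fun _ : Fin m => Finset.Icc 1 n).filter
      (fun f => Monotone f), (∏ j : Fin m, (f j : ℝ))⁻¹

lemma Icc_sum_eq_range (n : ℕ) (f : ℕ → ℝ) :
    ∑ k ∈ Icc 1 (n + 1), f k = ∑ i ∈ range (n + 1), f (i + 1) := by
  rw [← Finset.Ico_add_one_right_eq_Icc, Finset.sum_Ico_eq_sum_range]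
  simp [add_comm]

lemma Lf_zero (n : ℕ) (hn : 1 ≤ n) : Lf 0 n = 1 := by
  have h := Int.alternating_sum_range_choose_of_ne (Nat.one_le_iff_ne_zero.mp hn)
  have h' : (∑ i ∈ range (n + 1), ((-1 : ℝ) ^ i * n.choose i)) = 0 := by
    have := congrArg (fun z : ℤ => (z : ℝ)) h
    push_cast at this
    simpa using this
  obtain ⟨n', rfl⟩ : ∃ n', n = n' + 1 := ⟨n - 1, by omega⟩
  simp only [Lf, pow_zero, div_one]
  rw [Icc_sum_eq_range]
  rw [Finset.sum_range_succ'] at h'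
  simp only [pow_zero, one_mul, Nat.choose_zero_right, Nat.cast_one] at h'
  calc ∑ i ∈ range (n' + 1 - 1 + 1), ((n' + 1).choose (i+1) : ℝ) * (-1) ^ (i + 1 + 1)
      = ∑ i ∈ range (n' + 1), -((-1:ℝ)^(i+1) * ((n' + 1).choose (i+1))) := by
        apply Finset.sum_congr (congrArg range (by omega)) (fun i _ => by ring)
    _ = 1 := by rw [Finset.sum_neg_distrib]; linarith

lemma Lf_range (m n : ℕ) :
    Lf m n = ∑ i ∈ range n, (n.choose (i+1) : ℝ) * (-1) ^ (i + 2) / ((i : ℝ) + 1) ^ m := by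
  cases n with
  | zero => simp [Lf]
  | succ n' =>
    rw [Lf, Icc_sum_eq_range]
    apply Finset.sum_congr rfl
    intro i _
    push_cast
    ring_nf

lemma Lf_step (m n : ℕ) : Lf (m+1) (n+1) = Lf (m+1) n + Lf m (n+1) / (n+1) := by
  have key : ∀ i ∈ range (n+1),
      ((n+1).choose (i+1) : ℝ) * (-1) ^ (i + 2) / ((i : ℝ) + 1) ^ (m+1)
        = (n.choose (i+1) : ℝ) * (-1) ^ (i + 2) / ((i : ℝ) + 1) ^ (m+1)
          + ((n+1).choose (i+1) : ℝ) * (-1) ^ (i + 2) / ((i : ℝ) + 1) ^ m / (n+1) := by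
    intro i _
    have hc : ((n+1) : ℝ) * (n.choose i : ℝ) = ((n+1).choose (i+1) : ℝ) * ((i : ℝ) + 1) := by
      have := congrArg (fun z : ℕ => (z : ℝ)) (Nat.add_one_mul_choose_eq n i)
      push_cast at this
      linarith
    have hpascal : ((n+1).choose (i+1) : ℝ) = (n.choose i : ℝ) + (n.choose (i+1) : ℝ) := by
      rw [Nat.choose_succ_succ]; push_cast; ring
    have hi : ((i : ℝ) + 1) ≠ 0 := by positivity
    have hn1 : ((n : ℝ) + 1) ≠ 0 := by positivity
    have hx : ((i : ℝ) + 1) ^ m ≠ 0 := by positivity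
    have h2 : ((n+1).choose (i+1) : ℝ)/(((i:ℝ)+1)) = (n.choose (i+1):ℝ)/(((i:ℝ)+1)) + ((n+1).choose (i+1):ℝ)/((n:ℝ)+1) := by
      rw [div_add_div _ _ hi hn1, div_eq_div_iff hi (by positivity)]
      linear_combination (((n:ℝ)+1)*hpascal + hc) * ((i:ℝ)+1)
    calc ((n+1).choose (i+1) : ℝ) * (-1) ^ (i + 2) / ((i : ℝ) + 1) ^ (m+1)
        = (((n+1).choose (i+1) : ℝ)/((i:ℝ)+1)) * ((-1:ℝ)^(i+2)/((i:ℝ)+1)^m) := by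
          rw [pow_succ]; field_simp; ring_nf; try exact Or.inl trivial
      _ = ((n.choose (i+1):ℝ)/(((i:ℝ)+1)) + ((n+1).choose (i+1):ℝ)/((n:ℝ)+1)) * ((-1:ℝ)^(i+2)/((i:ℝ)+1)^m) := by
          rw [h2]
      _ = _ := by rw [pow_succ]; field_simp; ring_nf; try exact Or.inl trivial
  rw [Lf_range (m+1) (n+1), Finset.sum_congr rfl key, Finset.sum_add_distrib]
  congr 1
  · rw [Lf_range (m+1) n, Finset.sum_range_succ, Nat.choose_succ_self]
    simp
  · rw [Lf_range m (n+1), Finset.sum_div]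

lemma Lf_rec (m n : ℕ) : Lf (m+1) n = ∑ j ∈ Icc 1 n, Lf m j / j := by
  induction n with
  | zero => simp [Lf]
  | succ n ih =>
    rw [Finset.sum_Icc_succ_top (by omega), ← ih, Lf_step]
    push_cast
    ring

lemma Rf_zero (n : ℕ) : Rf 0 n = 1 := by
  rw [Rf, Finset.filter_true_of_mem (fun f _ => show Monotone f from fun a b _ => a.elim0)]
  simp

lemma mono_snoc {m : ℕ} {g : Fin m → ℕ} {j : ℕ} (hg : Monotone g)
    (hle : ∀ i, g i ≤ j) : Monotone (Fin.snoc g j) := by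
  intro a b hab
  rcases Fin.eq_castSucc_or_eq_last b with ⟨b', rfl⟩ | rfl
  · rcases Fin.eq_castSucc_or_eq_last a with ⟨a', rfl⟩ | rfl
    · simp only [Fin.snoc_castSucc]
      exact hg (Fin.castSucc_le_castSucc_iff.mp hab)
    · exact absurd (lt_of_le_of_lt hab (Fin.castSucc_lt_last b')) (lt_irrefl _)
  · rcases Fin.eq_castSucc_or_eq_last a with ⟨a', rfl⟩ | rfl
    · simp only [Fin.snoc_castSucc, Fin.snoc_last]
      exact hle a'
    · simp

lemma Rf_rec (m n : ℕ) : Rf (m+1) n = ∑ j ∈ Icc 1 n, Rf m j / j := by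
  have hsig := Finset.sum_sigma (Finset.Icc 1 n)
    (fun j => (Fintype.piFinset fun _ : Fin m => Finset.Icc 1 j).filter (fun f => Monotone f))
    (fun p => (∏ i : Fin m, ((p.2 i : ℕ) : ℝ))⁻¹ / (p.1 : ℝ))
  simp only [Rf, Finset.sum_div]
  rw [← hsig]
  symm
  apply Finset.sum_nbij' (i := fun p => Fin.snoc p.2 p.1)
      (j := fun f => ⟨f (Fin.last m), Fin.init f⟩)
  · rintro ⟨j, g⟩ hp
    simp only [Finset.mem_sigma, Finset.mem_filter, Fintype.mem_piFinset, Finset.mem_Icc] at hp ⊢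
    obtain ⟨hj, hg, hmono⟩ := hp
    refine ⟨fun i => ?_, mono_snoc hmono (fun i => (hg i).2)⟩
    rcases Fin.eq_castSucc_or_eq_last i with ⟨i', rfl⟩ | rfl
    · simp only [Fin.snoc_castSucc]
      exact ⟨(hg i').1, le_trans (hg i').2 hj.2⟩
    · simpa using hj
  · rintro f hf
    simp only [Finset.mem_filter, Fintype.mem_piFinset, Finset.mem_Icc] at hf
    obtain ⟨hf1, hmono⟩ := hf
    simp only [Finset.mem_sigma, Finset.mem_filter, Fintype.mem_piFinset, Finset.mem_Icc]
    refine ⟨⟨(hf1 (Fin.last m)).1, (hf1 (Fin.last m)).2⟩, fun i => ?_, ?_⟩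
    · exact ⟨(hf1 i.castSucc).1, hmono (Fin.le_last i.castSucc)⟩
    · intro a b hab
      exact hmono (Fin.castSucc_le_castSucc_iff.mpr hab)
  · rintro ⟨j, g⟩ _
    simp [Fin.init_snoc]
  · intro f _
    exact Fin.snoc_init_self f
  · rintro ⟨j, g⟩ hp
    simp only [Finset.mem_sigma, Finset.mem_filter, Fintype.mem_piFinset, Finset.mem_Icc] at hp
    have hj : 1 ≤ j := hp.1.1
    have key : ∏ i : Fin (m+1), (((Fin.snoc g j : Fin (m+1) → ℕ) i : ℕ) : ℝ)
        = (∏ i : Fin m, (g i : ℝ)) * (j : ℝ) := by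
      have e : (fun i => (((Fin.snoc g j : Fin (m+1) → ℕ) i : ℕ) : ℝ))
          = Fin.snoc (fun i => ((g i : ℕ) : ℝ)) ((j : ℕ) : ℝ) := by
        funext i
        rcases Fin.eq_castSucc_or_eq_last i with ⟨i', rfl⟩ | rfl <;> simp
      rw [e, Fin.prod_snoc]
    simp only [key, mul_inv, div_eq_mul_inv]

lemma main_key (m : ℕ) : ∀ n, 1 ≤ n → Lf m n = Rf m n := by
  induction m with
  | zero => exact fun n hn => (Lf_zero n hn).trans (Rf_zero n).symm
  | succ m ih =>
    intro n _
    rw [Lf_rec, Rf_rec]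
    exact Finset.sum_congr rfl fun j hj => by
      rw [ih j (Finset.mem_Icc.mp hj).1]


/-- For `n ≥ 1`, `m ≥ 1`,
`∑_{k=1}^{n} C(n,k) (−1)^{k+1} / k^m = ∑_{1 ≤ i₁ ≤ ⋯ ≤ i_m ≤ n} 1/(i₁⋯i_m)`,
the sum being over nondecreasing `m`-tuples of integers between `1` and `n`. -/
theorem alternating_binomial_sum_eq_monotone_tuples_sum
    (n m : ℕ) (hn : 1 ≤ n) (hm : 1 ≤ m) :
    (∑ k ∈ Finset.Icc 1 n, (n.choose k : ℝ) * (-1 : ℝ) ^ (k + 1) / (k : ℝ) ^ m)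
      = ∑ f ∈ (Fintype.piFinset fun _ : Fin m => Finset.Icc 1 n).filter
          (fun f => Monotone f),
          (∏ j : Fin m, (f j : ℝ))⁻¹ := main_key m n hn
end

section
/- For each fixed integer m ≥ 1, a(n,m) = (log n)^m / m! + O((log n)^{m−1}) as n → ∞; that is, there exist constants C > 0 and N such that for all n ≥ N, |a(n,m) − (log n)^m / m!| ≤ C (log n)^{m−1}. -/
/-!
Pascal's rule gives `a(n+1, m+1) = a(n, m+1) + a(n+1, m) / (n+1)`, and `a(n, 0) = 1` for `n ≥ 1`.
Inducting along this recursion, and comparing each increment `1/(n+1)` of the harmonic number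
`Hₙ` with the increment of a power via `(m+1) bᵐ (a - b) ≤ aᵐ⁺¹ - bᵐ⁺¹ ≤ (m+1) aᵐ (a - b)`,
squeezes `a(n, m)` between `Hₙᵐ / m!` and `(Hₙ + m)ᵐ / m!`. Since `log n ≤ Hₙ ≤ 1 + log n`, both
bounds are `(log n)ᵐ / m! + O((log n)ᵐ⁻¹)`.
-/

open Finset
open scoped Nat

noncomputable def alternatingBinomialSum (n m : ℕ) : ℝ :=
  ∑ k ∈ Icc 1 n, (n.choose k : ℝ) * (-1) ^ (k + 1) / (k : ℝ) ^ m

theorem alternatingBinomialSum_eq_sum_range (n m : ℕ) :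
    alternatingBinomialSum n m =
      ∑ k ∈ range n, (n.choose (k + 1) : ℝ) * (-1) ^ k / (k + 1 : ℝ) ^ m := by
  rw [alternatingBinomialSum, ← Ico_add_one_right_eq_Icc, sum_Ico_eq_sum_range,
    Nat.add_sub_cancel]
  simp [add_comm 1, pow_succ]

theorem alternatingBinomialSum_zero_left (m : ℕ) : alternatingBinomialSum 0 m = 0 := by
  simp [alternatingBinomialSum]

theorem alternatingBinomialSum_zero_right {n : ℕ} (hn : n ≠ 0) :
    alternatingBinomialSum n 0 = 1 := by
  have h : ∑ i ∈ range (n + 1), ((-1) ^ i * n.choose i : ℝ) = 0 := by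
    exact_mod_cast Int.alternating_sum_range_choose_of_ne hn
  rw [sum_range_succ'] at h
  simp only [alternatingBinomialSum_eq_sum_range, pow_succ, pow_zero, div_one, mul_neg_one,
    neg_mul, sum_neg_distrib, Nat.choose_zero_right, Nat.cast_one, one_mul] at h ⊢
  simp only [mul_comm] at h
  linarith

theorem alternatingBinomialSum_succ_succ (n m : ℕ) :
    alternatingBinomialSum (n + 1) (m + 1) =
      alternatingBinomialSum n (m + 1) + alternatingBinomialSum (n + 1) m / (n + 1) := by
  have pascal (k : ℕ) : ((n + 1).choose (k + 1) : ℝ) * (-1) ^ k / (k + 1) ^ (m + 1) =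
      (n.choose (k + 1) : ℝ) * (-1) ^ k / (k + 1) ^ (m + 1) +
        ((n + 1).choose (k + 1) : ℝ) * (-1) ^ k / (k + 1) ^ m / (n + 1) := by
    have absorb : (n.choose k : ℝ) / (k + 1) ^ (m + 1) =
        (n + 1).choose (k + 1) / (k + 1) ^ m / (n + 1) := by
      have := Nat.add_one_mul_choose_eq n k
      rw [div_div, div_eq_div_iff (by positivity) (by positivity), pow_succ]
      rify at this
      linear_combination (↑k + 1 : ℝ) ^ m * this
    conv_lhs => rw [Nat.choose_succ_succ', Nat.cast_add]
    linear_combination (-1) ^ k * absorb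
  simp only [alternatingBinomialSum_eq_sum_range, pascal, sum_add_distrib, sum_div, add_div,
    sum_range_succ _ n, Nat.choose_succ_self, Nat.cast_zero, zero_mul, zero_div, zero_add]
  ring

section PowSubPow

variable {R : Type*} [CommRing R] [LinearOrder R] [IsStrictOrderedRing R] {a b : R}

theorem mul_pow_mul_sub_le_pow_sub_pow (hb : 0 ≤ b) (hba : b ≤ a) (n : ℕ) :
    n * b ^ (n - 1) * (a - b) ≤ a ^ n - b ^ n := by
  rw [← geom_sum₂_mul, ← geom_sum₂_self]
  gcongr with i

theorem pow_sub_pow_le_mul_pow_mul_sub (hb : 0 ≤ b) (hba : b ≤ a) (n : ℕ) :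
    a ^ n - b ^ n ≤ n * a ^ (n - 1) * (a - b) := by
  rw [← geom_sum₂_mul, ← geom_sum₂_self]
  gcongr with i
  exact pow_nonneg (hb.trans hba) i

end PowSubPow

theorem harmonic_nonneg (n : ℕ) : 0 ≤ harmonic n := by
  rw [harmonic]; positivity

theorem pow_harmonic_div_factorial_le_alternatingBinomialSum (m : ℕ) {n : ℕ} (hn : n ≠ 0) :
    (harmonic n : ℝ) ^ m / m ! ≤ alternatingBinomialSum n m := by
  induction m generalizing n with
  | zero => simp [alternatingBinomialSum_zero_right hn]
  | succ m ih =>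
    clear hn
    induction n with
    | zero => simp [alternatingBinomialSum_zero_left]
    | succ n ihn =>
      have hH : (harmonic (n + 1) : ℝ) = harmonic n + 1 / (n + 1) := by
        push_cast [harmonic_succ]; ring
      have hH0 : (0 : ℝ) ≤ harmonic n := Rat.cast_nonneg.2 (harmonic_nonneg n)
      have step := pow_sub_pow_le_mul_pow_mul_sub hH0
        (hH ▸ le_add_of_nonneg_right (by positivity)) (m + 1)
      rw [hH, add_sub_cancel_left, Nat.add_sub_cancel] at step
      rw [alternatingBinomialSum_succ_succ]
      calc (harmonic (n + 1) : ℝ) ^ (m + 1) / (m + 1)!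
          = (harmonic n : ℝ) ^ (m + 1) / (m + 1)! +
              ((harmonic (n + 1) : ℝ) ^ (m + 1) - (harmonic n) ^ (m + 1)) / (m + 1)! := by ring
        _ ≤ (harmonic n : ℝ) ^ (m + 1) / (m + 1)! +
              (m + 1 : ℕ) * (harmonic (n + 1) : ℝ) ^ m * (1 / (n + 1)) / (m + 1)! := by
          rw [hH]; gcongr
        _ = (harmonic n : ℝ) ^ (m + 1) / (m + 1)! + (harmonic (n + 1) : ℝ) ^ m / m ! / (n + 1) := by
          rw [Nat.factorial_succ]; push_cast; field_simp
        _ ≤ alternatingBinomialSum n (m + 1) + alternatingBinomialSum (n + 1) m / (n + 1) := by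
          gcongr
          exact ih n.succ_ne_zero

theorem alternatingBinomialSum_le_pow_harmonic_add_div_factorial (n m : ℕ) :
    alternatingBinomialSum n m ≤ (harmonic n + m : ℝ) ^ m / m ! := by
  induction m generalizing n with
  | zero =>
    rcases eq_or_ne n 0 with rfl | hn
    · simp [alternatingBinomialSum_zero_left]
    · simp [alternatingBinomialSum_zero_right hn]
  | succ m ih =>
    induction n with
    | zero => simp only [alternatingBinomialSum_zero_left, harmonic_zero, Rat.cast_zero]; positivity
    | succ n ihn =>
      set b : ℝ := harmonic n + (m + 1)
      have hH : (harmonic (n + 1) : ℝ) + (m + 1 : ℕ) = b + 1 / (n + 1) := by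
        push_cast [harmonic_succ, b]; ring
      have hb : 0 ≤ b := add_nonneg (Rat.cast_nonneg.2 (harmonic_nonneg n)) (by positivity)
      have step := mul_pow_mul_sub_le_pow_sub_pow hb (le_add_of_nonneg_right (by positivity))
        (m + 1) (a := b + 1 / (n + 1))
      rw [add_sub_cancel_left, Nat.add_sub_cancel] at step
      -- the shift grows by one per level to absorb `Hₙ₊₁ - Hₙ ≤ 1`
      have hshift : (harmonic (n + 1) : ℝ) + m ≤ b := by
        have : 1 / ((n : ℝ) + 1) ≤ 1 := by rw [div_le_one (by positivity)]; linarith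
        push_cast [harmonic_succ, b] at hH ⊢; linarith
      rw [alternatingBinomialSum_succ_succ, hH]
      calc alternatingBinomialSum n (m + 1) + alternatingBinomialSum (n + 1) m / (n + 1)
          ≤ b ^ (m + 1) / (m + 1)! + (harmonic (n + 1) + m : ℝ) ^ m / m ! / (n + 1) := by
            gcongr
            · simpa [b] using ihn
            · exact ih (n + 1)
        _ ≤ b ^ (m + 1) / (m + 1)! + b ^ m / m ! / (n + 1) := by
          have := harmonic_nonneg (n + 1); gcongr
        _ = b ^ (m + 1) / (m + 1)! + (m + 1 : ℕ) * b ^ m * (1 / (n + 1)) / (m + 1)! := by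
          rw [Nat.factorial_succ]; push_cast; field_simp
        _ ≤ (b + 1 / (n + 1)) ^ (m + 1) / (m + 1)! := by
          rw [← add_div]; gcongr; linarith

theorem log_le_harmonic (n : ℕ) : Real.log n ≤ harmonic n := by
  simpa using log_le_harmonic_floor (n : ℝ) n.cast_nonneg

theorem log_pow_div_factorial_le_alternatingBinomialSum (m : ℕ) {n : ℕ} (hn : n ≠ 0) :
    Real.log n ^ m / m ! ≤ alternatingBinomialSum n m := by
  refine le_trans ?_ (pow_harmonic_div_factorial_le_alternatingBinomialSum m hn)
  gcongr
  exact log_le_harmonic n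

theorem alternatingBinomialSum_le_log_add_pow_div_factorial (n m : ℕ) :
    alternatingBinomialSum n m ≤ (Real.log n + (m + 1)) ^ m / m ! := by
  refine (alternatingBinomialSum_le_pow_harmonic_add_div_factorial n m).trans ?_
  have := harmonic_nonneg n
  have := harmonic_le_one_add_log n
  gcongr ?_ ^ _ / _
  linarith

theorem alternating_binomial_sum_asymptotic_general
    (m : ℕ) :
    ∃ C : ℝ, 0 < C ∧ ∃ N : ℕ, ∀ n : ℕ, N ≤ n →
      |(∑ k ∈ Finset.Icc 1 n, (n.choose k : ℝ) * (-1 : ℝ) ^ (k + 1) / (k : ℝ) ^ m)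
          - (Real.log n) ^ m / (m.factorial : ℝ)|
        ≤ C * (Real.log n) ^ (m - 1) := by
  refine ⟨(m + 1) ^ 2 * (m + 2) ^ (m - 1), by positivity, 3, fun n hn => ?_⟩
  change |alternatingBinomialSum n m - _| ≤ _
  set L := Real.log n
  have hL : 1 ≤ L := by
    have : Real.log 3 ≤ L := Real.log_le_log (by norm_num) (by exact_mod_cast hn)
    linarith [Real.log_three_gt_d9]
  have hlower := log_pow_div_factorial_le_alternatingBinomialSum m (by omega : n ≠ 0)
  rw [abs_of_nonneg (sub_nonneg.2 hlower)]
  calc alternatingBinomialSum n m - L ^ m / m.factorial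
      ≤ ((L + (m + 1)) ^ m - L ^ m) / m.factorial := by
        rw [sub_div]; gcongr; exact alternatingBinomialSum_le_log_add_pow_div_factorial n m
    _ ≤ (L + (m + 1)) ^ m - L ^ m :=
        div_le_self (sub_nonneg.2 (by gcongr; linarith)) (by exact_mod_cast m.factorial_pos)
    _ ≤ m * (L + (m + 1)) ^ (m - 1) * (m + 1) := by
        simpa using pow_sub_pow_le_mul_pow_mul_sub (a := L + (m + 1)) (b := L) (by linarith)
          (le_add_of_nonneg_right (by positivity)) m
    _ ≤ (m + 1) * ((m + 2) * L) ^ (m - 1) * (m + 1) := by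
        have : L + (m + 1) ≤ (m + 2) * L := by nlinarith
        gcongr; linarith
    _ = (m + 1) ^ 2 * (m + 2) ^ (m - 1) * L ^ (m - 1) := by rw [mul_pow]; ring

/-- For each fixed `m ≥ 1`,
`a(n,m) = (log n)^m / m! + O((log n)^{m−1})` as `n → ∞`, i.e. there exist `C > 0` and `N`
such that for all `n ≥ N`,
`|a(n,m) − (log n)^m / m!| ≤ C (log n)^{m−1}`, where
`a(n,m) = ∑_{k=1}^{n} C(n,k) (−1)^{k+1} / k^m`. -/
theorem alternating_binomial_sum_asymptotic
    (m : ℕ) (hm : 1 ≤ m) :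
    ∃ C : ℝ, 0 < C ∧ ∃ N : ℕ, ∀ n : ℕ, N ≤ n →
      |(∑ k ∈ Finset.Icc 1 n, (n.choose k : ℝ) * (-1 : ℝ) ^ (k + 1) / (k : ℝ) ^ m)
          - (Real.log n) ^ m / (m.factorial : ℝ)|
        ≤ C * (Real.log n) ^ (m - 1) :=
  alternating_binomial_sum_asymptotic_general m
end

section
/- For all integers n ≥ 1 and m ≥ 2, 0 < a(n,m) − ã(n,m) ≤ 2m (log n + 1)^{m−2}, where ã(n,m) := ∑_{1 ≤ i₁ < i₂ < ⋯ < i_m ≤ n} 1/(i₁ i₂ ⋯ i_m) is the analogous sum over strictly increasing m-tuples (so ã(n,m) = 0 when m > n). -/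
/-!
Both `a(n, m)` and the sum of `1 / (i₁ ⋯ i_m)` over weakly increasing tuples in `[1, n]` satisfy
`F (n + 1) (m + 1) = F n (m + 1) + F (n + 1) m / (n + 1)` with the same boundary values: for `a`
this is Pascal's rule together with `(n + 1) C(n, k - 1) = k C(n + 1, k)`, for the tuple sum it is
the split according to whether the last entry equals `n + 1`. Hence `a(n, m) - ã(n, m)` is the sum
over weakly but not strictly increasing tuples. It is positive because the constant tuple `1`
contributes, and it is at most the sum over `1 ≤ j < m` of the sums over all tuples with
`i_j = i_{j+1}`; each of these factors as `(∑ 1/i²) (∑ 1/i)^(m-2) ≤ 2 (log n + 1)^(m-2)`.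
-/

open Finset

lemma Fin.monotone_snoc_iff {α : Type*} [Preorder α] {m : ℕ} {g : Fin m → α} {x : α} :
    Monotone (Fin.snoc g x : Fin (m + 1) → α) ↔ Monotone g ∧ ∀ i, g i ≤ x := by
  refine ⟨fun hf => ⟨fun a b hab => ?_, fun i => ?_⟩, fun ⟨hg, hx⟩ a b hab => ?_⟩
  · simpa using hf (Fin.castSucc_le_castSucc_iff.mpr hab)
  · simpa using hf (Fin.le_last i.castSucc)
  · induction b using Fin.lastCases with
    | last => induction a using Fin.lastCases <;> simp [hx]
    | cast b =>
      induction a using Fin.lastCases with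
      | last => exact absurd hab (not_le.mpr (Fin.castSucc_lt_last b))
      | cast a => simpa using hg (Fin.castSucc_le_castSucc_iff.mp hab)

lemma Fin.exists_castSucc_eq_succ_of_not_strictMono {α : Type*} [PartialOrder α] {m : ℕ}
    {f : Fin (m + 1) → α} (hf : Monotone f) (hs : ¬ StrictMono f) :
    ∃ j : Fin m, f j.castSucc = f j.succ := by
  simp only [Fin.strictMono_iff_lt_succ, not_forall] at hs
  obtain ⟨j, hj⟩ := hs
  exact ⟨j, not_not.mp fun hne => hj ((hf Fin.castSucc_lt_succ.le).lt_of_ne hne)⟩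

lemma Finset.sum_filter_le_sum_sum_filter {ι α M : Type*} [AddCommMonoid M] [PartialOrder M]
    [IsOrderedAddMonoid M] {s : Finset α} {t : Finset ι} {q : α → Prop} [DecidablePred q]
    {p : ι → α → Prop} [∀ i, DecidablePred (p i)] {g : α → M}
    (hcover : ∀ x ∈ s, q x → ∃ i ∈ t, p i x) (hg : ∀ x ∈ s, 0 ≤ g x) :
    ∑ x ∈ s.filter q, g x ≤ ∑ i ∈ t, ∑ x ∈ s.filter (p i), g x := by
  simp only [sum_filter]
  rw [sum_comm]
  refine sum_le_sum fun x hx => ?_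
  have hnonneg : ∀ i ∈ t, 0 ≤ if p i x then g x else 0 := fun i _ => by
    split_ifs
    exacts [hg x hx, le_rfl]
  split_ifs with hq
  · obtain ⟨i, hi, hpi⟩ := hcover x hx hq
    simpa [hpi] using single_le_sum hnonneg hi
  · exact sum_nonneg hnonneg

lemma sum_piFinset_filter_apply_eq_apply_prod {R α : Type*} [CommSemiring R] [DecidableEq α]
    (s : Finset α) (w : α → R) {M : ℕ} {a b : Fin (M + 2)} (hab : a ≠ b) :
    ∑ f ∈ (Fintype.piFinset fun _ => s).filter (fun f => f a = f b), ∏ k, w (f k) =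
      (∑ x ∈ s, w x ^ 2) * (∑ x ∈ s, w x) ^ M := by
  obtain ⟨c, rfl⟩ := Fin.exists_succAbove_eq hab
  -- Deleting the coordinate `b` leaves a free tuple whose coordinate `c` carries the weight twice.
  let v : Fin (M + 1) → α → R := fun i x => if i = c then w x ^ 2 else w x
  have hv : ∏ i, ∑ x ∈ s, v i x = (∑ x ∈ s, w x ^ 2) * (∑ x ∈ s, w x) ^ M := by
    rw [Fin.prod_univ_succAbove _ c]
    simp [v, Fin.succAbove_ne]
  rw [← hv, prod_univ_sum]
  refine sum_nbij' b.removeNth (fun g => b.insertNth (g c) g) ?_ ?_ ?_ ?_ ?_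
  · intro f hf
    simp only [mem_filter, Fintype.mem_piFinset] at hf ⊢
    exact fun i => hf.1 _
  · intro g hg
    simp only [mem_filter, Fintype.mem_piFinset] at hg ⊢
    simp [Fin.forall_iff_succAbove b, hg]
  · intro f hf
    rw [Fin.removeNth_apply, (mem_filter.mp hf).2, Fin.insertNth_self_removeNth]
  · intro g _
    exact Fin.removeNth_insertNth _ _ _
  · intro f hf
    rw [Fin.prod_univ_succAbove _ b, Fin.prod_univ_succAbove _ c, Fin.prod_univ_succAbove _ c]
    simp [v, Fin.succAbove_ne, Fin.removeNth, (mem_filter.mp hf).2]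
    ring

lemma sum_Icc_inv_le_log_add_one (n : ℕ) : ∑ x ∈ Icc 1 n, (x : ℝ)⁻¹ ≤ Real.log n + 1 := by
  simpa [harmonic_eq_sum_Icc, add_comm] using harmonic_le_one_add_log n

lemma sum_Icc_inv_sq_le_two (n : ℕ) : ∑ x ∈ Icc 1 n, ((x : ℝ)⁻¹) ^ 2 ≤ 2 := by
  have h := sum_Ioo_inv_sq_le (α := ℝ) 0 (n + 1)
  rw [Ioo_add_one_right_eq_Ioc, ← Icc_add_one_left_eq_Ioc, zero_add] at h
  simpa using h

noncomputable def altBinomialSum (n m : ℕ) : ℝ :=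
  ∑ k ∈ Icc 1 n, (n.choose k : ℝ) * (-1) ^ (k + 1) / (k : ℝ) ^ m

@[simp]
lemma altBinomialSum_zero_left (m : ℕ) : altBinomialSum 0 m = 0 := by
  simp [altBinomialSum]

lemma altBinomialSum_zero_right {n : ℕ} (hn : n ≠ 0) : altBinomialSum n 0 = 1 := by
  have h := Int.alternating_sum_range_choose_of_ne hn
  rw [Nat.range_succ_eq_Icc_zero, ← insert_Icc_add_one_left_eq_Icc (Nat.zero_le n),
    sum_insert (by simp)] at h
  have hR : (1 : ℝ) + ∑ k ∈ Icc 1 n, (-1) ^ k * (n.choose k : ℝ) = 0 := by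
    simpa using congrArg (fun z : ℤ => (z : ℝ)) h
  simp only [altBinomialSum, pow_zero, div_one, pow_succ, mul_neg_one, neg_mul, sum_neg_distrib,
    mul_comm (n.choose _ : ℝ)]
  linarith

lemma altBinomialSum_succ_succ (n m : ℕ) :
    altBinomialSum (n + 1) (m + 1) =
      altBinomialSum n (m + 1) + altBinomialSum (n + 1) m / (n + 1) := by
  have hterm : ∀ k ∈ Icc 1 (n + 1),
      ((n + 1).choose k : ℝ) * (-1) ^ (k + 1) / (k : ℝ) ^ (m + 1) =
        (n.choose k : ℝ) * (-1) ^ (k + 1) / (k : ℝ) ^ (m + 1) +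
          ((n + 1).choose k : ℝ) * (-1) ^ (k + 1) / (k : ℝ) ^ m / (n + 1) := by
    intro k hk
    obtain ⟨j, rfl⟩ : ∃ j, k = j + 1 := ⟨k - 1, by grind⟩
    have pascal : ((n + 1).choose (j + 1) : ℝ) = n.choose j + n.choose (j + 1) := by
      exact_mod_cast Nat.choose_succ_succ' n j
    have absorb : (n.choose j : ℝ) / ((j + 1 : ℕ) : ℝ) ^ (m + 1) =
        (n + 1).choose (j + 1) / ((j + 1 : ℕ) : ℝ) ^ m / (n + 1) := by
      rw [div_div, div_eq_div_iff (by positivity) (by positivity)]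
      have h : ((n : ℝ) + 1) * n.choose j = (n + 1).choose (j + 1) * ((j : ℝ) + 1) := by
        exact_mod_cast Nat.add_one_mul_choose_eq n j
      push_cast
      linear_combination ((j : ℝ) + 1) ^ m * h
    conv_lhs => rw [pascal]
    linear_combination (-1) ^ (j + 1 + 1) * absorb
  rw [altBinomialSum, sum_congr rfl hterm, sum_add_distrib, ← sum_div,
    sum_Icc_succ_top (by omega), Nat.choose_succ_self]
  simp [altBinomialSum]

noncomputable def monotoneTupleSum (n m : ℕ) : ℝ :=
  ∑ f ∈ (Fintype.piFinset fun _ : Fin m => Icc 1 n).filter Monotone, ∏ j, (f j : ℝ)⁻¹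

@[simp]
lemma monotoneTupleSum_zero_right (n : ℕ) : monotoneTupleSum n 0 = 1 := by
  simp [monotoneTupleSum, Subsingleton.monotone]

@[simp]
lemma monotoneTupleSum_zero_left (m : ℕ) : monotoneTupleSum 0 (m + 1) = 0 := by
  simp [monotoneTupleSum]

lemma monotoneTupleSum_succ_succ (n m : ℕ) :
    monotoneTupleSum (n + 1) (m + 1) =
      monotoneTupleSum n (m + 1) + monotoneTupleSum (n + 1) m / (n + 1) := by
  rw [monotoneTupleSum, ← sum_filter_add_sum_filter_not _ (fun f => f (Fin.last m) ≤ n)]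
  congr 1
  · congr 1
    ext f
    simp only [mem_filter, Fintype.mem_piFinset, mem_Icc]
    refine ⟨fun ⟨⟨hf, hmono⟩, hlast⟩ => ⟨fun i => ⟨(hf i).1, (hmono (Fin.le_last i)).trans hlast⟩,
      hmono⟩, fun ⟨hf, hmono⟩ => ⟨⟨fun i => ⟨(hf i).1, (hf i).2.trans n.le_succ⟩, hmono⟩, (hf _).2⟩⟩
  · rw [monotoneTupleSum, sum_div]
    have hlast : ∀ f ∈ ((Fintype.piFinset fun _ : Fin (m + 1) => Icc 1 (n + 1)).filter
        Monotone).filter (fun f => ¬ f (Fin.last m) ≤ n), f (Fin.last m) = n + 1 := by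
      intro f hf
      simp only [mem_filter, Fintype.mem_piFinset, mem_Icc] at hf
      have := hf.1.1 (Fin.last m)
      omega
    refine sum_nbij' Fin.init (fun g => Fin.snoc g (n + 1)) ?_ ?_ ?_
      (fun g _ => Fin.init_snoc _ _) ?_
    · intro f hf
      simp only [mem_filter, Fintype.mem_piFinset] at hf ⊢
      exact ⟨fun i => hf.1.1 _, hf.1.2.comp Fin.strictMono_castSucc.monotone⟩
    · intro g hg
      simp only [mem_filter, Fintype.mem_piFinset, mem_Icc] at hg ⊢
      refine ⟨⟨fun i => ?_, Fin.monotone_snoc_iff.mpr ⟨hg.2, fun i => (hg.1 i).2⟩⟩, by simp⟩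
      induction i using Fin.lastCases <;> simp [hg.1]
    · intro f hf
      rw [← hlast f hf, Fin.snoc_init_self]
    · intro f hf
      rw [Fin.prod_univ_castSucc, hlast f hf, div_eq_mul_inv]
      push_cast
      rfl

lemma altBinomialSum_eq_monotoneTupleSum {n : ℕ} (hn : n ≠ 0) (m : ℕ) :
    altBinomialSum n m = monotoneTupleSum n m := by
  obtain ⟨n, rfl⟩ := Nat.exists_eq_add_one_of_ne_zero hn
  clear hn
  induction m generalizing n with
  | zero => rw [altBinomialSum_zero_right n.succ_ne_zero, monotoneTupleSum_zero_right]
  | succ m ihm =>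
    induction n with
    | zero => simp [altBinomialSum_succ_succ, monotoneTupleSum_succ_succ, ihm]
    | succ n ihn => rw [altBinomialSum_succ_succ, monotoneTupleSum_succ_succ, ihn, ihm]

lemma monotoneTupleSum_eq_sum_strictMono_add (n m : ℕ) :
    monotoneTupleSum n m =
      ∑ f ∈ (Fintype.piFinset fun _ : Fin m => Icc 1 n).filter StrictMono, (∏ j, (f j : ℝ))⁻¹ +
        ∑ f ∈ (Fintype.piFinset fun _ : Fin m => Icc 1 n).filter
          (fun f => Monotone f ∧ ¬ StrictMono f), ∏ j, (f j : ℝ)⁻¹ := by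
  rw [monotoneTupleSum, ← sum_filter_add_sum_filter_not _ StrictMono, filter_filter, filter_filter]
  congr 1
  refine sum_congr (filter_congr fun f _ => ?_) fun f _ => prod_inv_distrib _
  exact ⟨fun h => h.2, fun h => ⟨h.monotone, h⟩⟩

lemma sum_monotone_not_strictMono_pos {n m : ℕ} (hn : 1 ≤ n) (hm : 2 ≤ m) :
    0 < ∑ f ∈ (Fintype.piFinset fun _ : Fin m => Icc 1 n).filter
      (fun f => Monotone f ∧ ¬ StrictMono f), ∏ j, (f j : ℝ)⁻¹ := by
  refine sum_pos (fun f hf => prod_pos fun j _ => ?_) ⟨fun _ => 1, ?_⟩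
  · have hfj := (Fintype.mem_piFinset.mp (mem_filter.mp hf).1 j)
    exact inv_pos.mpr (Nat.cast_pos.mpr (mem_Icc.mp hfj).1)
  · have h01 : (⟨0, by omega⟩ : Fin m) < ⟨1, by omega⟩ := by simp [Fin.lt_def]
    simpa [hn, monotone_const] using fun h : StrictMono (fun _ : Fin m => 1) => (h h01).false

lemma sum_monotone_not_strictMono_le (n M : ℕ) :
    ∑ f ∈ (Fintype.piFinset fun _ : Fin (M + 2) => Icc 1 n).filter
      (fun f => Monotone f ∧ ¬ StrictMono f), ∏ j, (f j : ℝ)⁻¹ ≤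
        2 * (M + 1) * (Real.log n + 1) ^ M := by
  calc _ ≤ ∑ j : Fin (M + 1), ∑ f ∈ (Fintype.piFinset fun _ : Fin (M + 2) => Icc 1 n).filter
          (fun f => f j.castSucc = f j.succ), ∏ k, (f k : ℝ)⁻¹ :=
        sum_filter_le_sum_sum_filter
          (fun f _ hf => by
            obtain ⟨j, hj⟩ := Fin.exists_castSucc_eq_succ_of_not_strictMono hf.1 hf.2
            exact ⟨j, mem_univ j, hj⟩)
          (fun f _ => by positivity)
    _ = ∑ _j : Fin (M + 1), (∑ x ∈ Icc 1 n, ((x : ℝ)⁻¹) ^ 2) * (∑ x ∈ Icc 1 n, (x : ℝ)⁻¹) ^ M :=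
        sum_congr rfl fun j _ => sum_piFinset_filter_apply_eq_apply_prod (Icc 1 n)
          (fun x : ℕ => (x : ℝ)⁻¹) Fin.castSucc_lt_succ.ne
    _ ≤ ∑ _j : Fin (M + 1), 2 * (Real.log n + 1) ^ M := by
        gcongr
        exacts [sum_Icc_inv_sq_le_two n, sum_Icc_inv_le_log_add_one n]
    _ = 2 * (M + 1) * (Real.log n + 1) ^ M := by
        simp
        ring

/-- For `n ≥ 1`, `m ≥ 2`, writing
`a(n,m) = ∑_{k=1}^{n} C(n,k)(−1)^{k+1}/k^m` and
`ã(n,m) = ∑_{1 ≤ i₁ < ⋯ < i_m ≤ n} 1/(i₁⋯i_m)` (the sum over strictly increasing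
`m`-tuples), we have `0 < a(n,m) − ã(n,m) ≤ 2m (log n + 1)^{m−2}`. -/
theorem alternating_binomial_sum_sub_strict_tuples_bound
    (n m : ℕ) (hn : 1 ≤ n) (hm : 2 ≤ m) :
    0 < (∑ k ∈ Finset.Icc 1 n, (n.choose k : ℝ) * (-1 : ℝ) ^ (k + 1) / (k : ℝ) ^ m)
        - ∑ f ∈ (Fintype.piFinset fun _ : Fin m => Finset.Icc 1 n).filter
            (fun f => StrictMono f), (∏ j : Fin m, (f j : ℝ))⁻¹
    ∧ (∑ k ∈ Finset.Icc 1 n, (n.choose k : ℝ) * (-1 : ℝ) ^ (k + 1) / (k : ℝ) ^ m)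
        - (∑ f ∈ (Fintype.piFinset fun _ : Fin m => Finset.Icc 1 n).filter
            (fun f => StrictMono f), (∏ j : Fin m, (f j : ℝ))⁻¹)
      ≤ 2 * m * (Real.log n + 1) ^ (m - 2) := by
  change 0 < altBinomialSum n m - _ ∧ altBinomialSum n m - _ ≤ _
  rw [altBinomialSum_eq_monotoneTupleSum (by omega), monotoneTupleSum_eq_sum_strictMono_add, add_sub_cancel_left]
  obtain ⟨M, rfl⟩ : ∃ M, m = M + 2 := ⟨m - 2, by omega⟩
  refine ⟨sum_monotone_not_strictMono_pos hn hm, (sum_monotone_not_strictMono_le n M).trans ?_⟩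
  rw [Nat.add_sub_cancel]
  gcongr
  push_cast
  linarith
end

section
/- Let ρ : ℝ → ℝ be the Dickman function, i.e. ρ is continuous, ρ(x) = 1 for x ≤ 1 (and ρ(x) = 1 for 0 ≤ x ≤ 1), and ρ is differentiable on (1,∞) with x ρ′(x) = −ρ(x−1) for all x > 1. Then ∫_{0}^{∞} ρ(u) du = e^{γ}. Equivalently, the probability measure with cumulative distribution function 1 − ρ has mean e^{γ}. -/
/-!
The Laplace transform `L(s) = ∫₀^∞ e^{-su} ρ(u) du` turns the delay equation
`u ρ'(u) = -ρ(u - 1)` into `s L'(s) = -(1 - e^{-s}) L(s)`, so `log L(s) + Ein(s)` is constant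
for `s > 0`, where `Ein(s) = ∫₀^s (1 - e^{-t})/t dt`. As `s → ∞`, `s L(s) → ρ(0) = 1` and
`Ein(s) - log s → γ` (compare `H_n = ∫₀^n (1 - (1 - t/n)^n)/t dt` with `Ein(n)` by dominated
convergence), so the constant is `γ` and `L(s) = exp(γ - Ein(s))`. Letting `s → 0⁺` gives
`∫₀^∞ ρ = L(0) = e^γ`.
-/

open Filter MeasureTheory Real Set Topology

noncomputable def Ein (s : ℝ) : ℝ := ∫ t in (0 : ℝ)..s, (1 - exp (-t)) / t

lemma intervalIntegrable_of_mem_Icc_zero_one {f : ℝ → ℝ} {b : ℝ} (hb : 0 ≤ b)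
    (hf : Measurable f) (hbound : ∀ t ∈ Ioc 0 b, f t ∈ Icc 0 1) :
    IntervalIntegrable f volume 0 b := by
  refine (intervalIntegrable_const (c := (1 : ℝ))).mono_fun' hf.aestronglyMeasurable ?_
  rw [uIoc_of_le hb, EventuallyLE, ae_restrict_iff' measurableSet_Ioc]
  filter_upwards with t ht
  rw [norm_of_nonneg (hbound t ht).1]
  exact (hbound t ht).2

lemma one_sub_exp_neg_div_mem_Icc {t : ℝ} (ht : 0 < t) : (1 - exp (-t)) / t ∈ Icc 0 1 := by
  have hexp : exp (-t) ≤ 1 := exp_le_one_iff.2 (by linarith)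
  exact ⟨div_nonneg (by linarith) ht.le, (div_le_one ht).2 (by linarith [add_one_le_exp (-t)])⟩

lemma one_sub_one_sub_div_pow_div_mem_Icc {n : ℕ} {t : ℝ} (ht : 0 < t) (htn : t ≤ n) :
    (1 - (1 - t / n) ^ n) / t ∈ Icc 0 1 := by
  have hn : (0 : ℝ) < n := ht.trans_le htn
  have hquot : 0 ≤ t / n ∧ t / n ≤ 1 := ⟨by positivity, (div_le_one hn).2 htn⟩
  have hle : (1 - t / n) ^ n ≤ 1 := pow_le_one₀ (by linarith) (by linarith)
  have hbernoulli : 1 - t ≤ (1 - t / n) ^ n := by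
    have := one_add_mul_le_pow (a := -(t / n)) (by linarith) n
    rwa [mul_neg, mul_div_cancel₀ _ hn.ne', ← sub_eq_add_neg, ← sub_eq_add_neg] at this
  exact ⟨div_nonneg (by linarith) ht.le, (div_le_one ht).2 (by linarith)⟩

lemma intervalIntegrable_one_sub_exp_neg_div {b : ℝ} (hb : 0 ≤ b) :
    IntervalIntegrable (fun t => (1 - exp (-t)) / t) volume 0 b :=
  intervalIntegrable_of_mem_Icc_zero_one hb (by fun_prop)
    fun _ ht => one_sub_exp_neg_div_mem_Icc ht.1

lemma hasDerivAt_Ein {s : ℝ} (hs : 0 < s) : HasDerivAt Ein ((1 - exp (-s)) / s) s := by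
  have hmeas : Measurable fun t : ℝ => (1 - exp (-t)) / t := by fun_prop
  exact intervalIntegral.integral_hasDerivAt_right (intervalIntegrable_one_sub_exp_neg_div hs.le)
    hmeas.stronglyMeasurable.stronglyMeasurableAtFilter
    (ContinuousAt.div (by fun_prop) continuousAt_id hs.ne')

lemma abs_Ein_le {s : ℝ} (hs : 0 ≤ s) : |Ein s| ≤ s := by
  have := intervalIntegral.norm_integral_le_of_norm_le_const (C := 1)
    (f := fun t => (1 - exp (-t)) / t) (a := 0) (b := s) fun t ht => by
      rw [uIoc_of_le hs] at ht
      rw [norm_of_nonneg (one_sub_exp_neg_div_mem_Icc ht.1).1]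
      exact (one_sub_exp_neg_div_mem_Icc ht.1).2
  simpa [Ein, abs_of_nonneg hs] using this

lemma tendsto_Ein_nhdsGT_zero : Tendsto Ein (𝓝[>] 0) (𝓝 0) := by
  refine squeeze_zero_norm' ?_ (tendsto_nhdsWithin_of_tendsto_nhds tendsto_id)
  filter_upwards [self_mem_nhdsWithin] with s hs
  exact abs_Ein_le (le_of_lt hs)

lemma integrableOn_exp_neg_div_Ioi_one :
    IntegrableOn (fun t => exp (-t) / t) (Ioi 1) := by
  have hexp : IntegrableOn (fun t : ℝ => exp (-t)) (Ioi 1) := by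
    simpa using exp_neg_integrableOn_Ioi 1 one_pos
  refine hexp.mono' (by fun_prop : Measurable fun t : ℝ => exp (-t) / t).aestronglyMeasurable ?_
  rw [ae_restrict_iff' measurableSet_Ioi]
  filter_upwards with t (ht : 1 < t)
  rw [norm_of_nonneg (by positivity)]
  exact div_le_self (exp_nonneg _) ht.le

lemma Ein_sub_log_eq {s : ℝ} (hs : 1 ≤ s) :
    Ein s - log s = Ein 1 - ∫ t in (1 : ℝ)..s, exp (-t) / t := by
  have hcont : ∀ f : ℝ → ℝ, Continuous f →
      IntervalIntegrable (fun t => f t / t) volume 1 s :=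
    fun f hf => (hf.continuousOn.div continuousOn_id fun t ht => by
      rw [uIcc_of_le hs] at ht; exact (zero_lt_one.trans_le ht.1).ne').intervalIntegrable
  have hsplit : Ein s = Ein 1 + ∫ t in (1 : ℝ)..s, (1 - exp (-t)) / t :=
    (intervalIntegral.integral_add_adjacent_intervals
      (intervalIntegrable_one_sub_exp_neg_div zero_le_one) (hcont _ (by fun_prop))).symm
  have hlog : ∫ t in (1 : ℝ)..s, 1 / t = log s := by
    rw [integral_one_div_of_pos one_pos (by linarith), div_one]
  simp only [sub_div] at hsplit
  rw [hsplit, intervalIntegral.integral_sub (hcont _ continuous_const) (hcont _ (by fun_prop)),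
    hlog]
  ring

lemma tendsto_Ein_sub_log_atTop_integral :
    Tendsto (fun s => Ein s - log s) atTop (𝓝 (Ein 1 - ∫ t in Ioi 1, exp (-t) / t)) :=
  ((intervalIntegral_tendsto_integral_Ioi 1 integrableOn_exp_neg_div_Ioi_one
    tendsto_id).const_sub (Ein 1)).congr' <| by
      filter_upwards [eventually_ge_atTop 1] with s hs using (Ein_sub_log_eq hs).symm

lemma harmonic_eq_integral_one_sub_pow_div (n : ℕ) :
    (harmonic n : ℝ) = ∫ u in (0 : ℝ)..1, (1 - (1 - u) ^ n) / u := by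
  have hgeom : ∀ᵐ u, u ∈ uIoc (0 : ℝ) 1 →
      (1 - (1 - u) ^ n) / u = ∑ k ∈ Finset.range n, (1 - u) ^ k := by
    filter_upwards with u hu
    have hu0 : u ≠ 0 := by rw [uIoc_of_le zero_le_one] at hu; exact hu.1.ne'
    rw [geom_sum_eq (by simpa using hu0), show 1 - u - 1 = -u by ring, div_neg, ← neg_div,
      neg_sub]
  have hpow : ∀ k : ℕ, ∫ u in (0 : ℝ)..1, (1 - u) ^ k = ((k : ℝ) + 1)⁻¹ := fun k => by
    simp [intervalIntegral.integral_comp_sub_left (fun u => u ^ k), integral_pow]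
  rw [intervalIntegral.integral_congr_ae hgeom, intervalIntegral.integral_finsetSum
    fun k _ => (by fun_prop : Continuous fun u : ℝ => (1 - u) ^ k).intervalIntegrable 0 1]
  simp [hpow, harmonic]

lemma harmonic_eq_integral (n : ℕ) :
    (harmonic n : ℝ) = ∫ t in (0 : ℝ)..n, (1 - (1 - t / n) ^ n) / t := by
  rcases n.eq_zero_or_pos with rfl | hn
  · simp
  have hn' : (n : ℝ) ≠ 0 := by positivity
  have hscale : ∀ t : ℝ,
      (1 - (1 - t / n) ^ n) / t = (n : ℝ)⁻¹ * ((1 - (1 - t / n) ^ n) / (t / n)) :=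
    fun t => by field_simp
  simp only [hscale, intervalIntegral.integral_const_mul,
    intervalIntegral.integral_comp_div (fun u => (1 - (1 - u) ^ n) / u) hn', zero_div,
    div_self hn', smul_eq_mul, inv_mul_cancel_left₀ hn', harmonic_eq_integral_one_sub_pow_div]

lemma exp_neg_sub_one_sub_div_pow_div_mem_Icc {n : ℕ} {t : ℝ} (ht : 0 < t) (htn : t ≤ n) :
    (exp (-t) - (1 - t / n) ^ n) / t ∈ Icc 0 (exp (1 - t)) := by
  have hn : (0 : ℝ) < n := ht.trans_le htn
  have hpow : 0 ≤ (1 - t / n) ^ n := pow_nonneg (by linarith [(div_le_one hn).2 htn]) n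
  refine ⟨div_nonneg (by linarith [one_sub_div_pow_le_exp_neg htn]) ht.le, ?_⟩
  rcases le_total t 1 with ht1 | ht1
  · calc (exp (-t) - (1 - t / n) ^ n) / t ≤ (1 - (1 - t / n) ^ n) / t := by
          gcongr; exact exp_le_one_iff.2 (by linarith)
      _ ≤ 1 := (one_sub_one_sub_div_pow_div_mem_Icc ht htn).2
      _ ≤ exp (1 - t) := one_le_exp (by linarith)
  · calc (exp (-t) - (1 - t / n) ^ n) / t ≤ exp (-t) / t := by gcongr; linarith
      _ ≤ exp (-t) := div_le_self (exp_nonneg _) ht1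
      _ ≤ exp (1 - t) := exp_le_exp.2 (by linarith)

lemma harmonic_sub_Ein_eq (n : ℕ) : (harmonic n : ℝ) - Ein n =
    ∫ t in Ioi 0, (Ioc 0 (n : ℝ)).indicator (fun t => (exp (-t) - (1 - t / n) ^ n) / t) t := by
  have hint : IntervalIntegrable (fun t : ℝ => (1 - (1 - t / n) ^ n) / t) volume 0 n :=
    intervalIntegrable_of_mem_Icc_zero_one n.cast_nonneg (by fun_prop)
      fun _ ht => one_sub_one_sub_div_pow_div_mem_Icc ht.1 ht.2
  rw [setIntegral_indicator measurableSet_Ioc, inter_eq_self_of_subset_right Ioc_subset_Ioi_self,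
    ← intervalIntegral.integral_of_le n.cast_nonneg, harmonic_eq_integral, Ein,
    ← intervalIntegral.integral_sub hint (intervalIntegrable_one_sub_exp_neg_div n.cast_nonneg)]
  congr with t
  ring

lemma tendsto_harmonic_sub_Ein :
    Tendsto (fun n : ℕ => (harmonic n : ℝ) - Ein n) atTop (𝓝 0) := by
  have hbound : IntegrableOn (fun t => exp (1 - t)) (Ioi 0) := by
    refine IntegrableOn.congr_fun ((exp_neg_integrableOn_Ioi 0 one_pos).const_mul (exp 1))
      (fun t _ => ?_) measurableSet_Ioi
    rw [← exp_add]; ring_nf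
  suffices hlim : Tendsto (fun n : ℕ => ∫ t in Ioi 0,
      (Ioc 0 (n : ℝ)).indicator (fun t => (exp (-t) - (1 - t / n) ^ n) / t) t) atTop
      (𝓝 (∫ t in Ioi (0 : ℝ), (0 : ℝ))) by
    simpa only [harmonic_sub_Ein_eq, integral_zero] using hlim
  refine tendsto_integral_filter_of_dominated_convergence _ ?_ ?_ hbound ?_
  · exact Eventually.of_forall fun n =>
      ((by fun_prop : Measurable fun t : ℝ => (exp (-t) - (1 - t / n) ^ n) / t).indicator
        measurableSet_Ioc).aestronglyMeasurable
  · refine Eventually.of_forall fun n => (ae_restrict_iff' measurableSet_Ioi).2 <|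
      Eventually.of_forall fun t (ht : 0 < t) => ?_
    by_cases htn : t ∈ Ioc 0 (n : ℝ)
    · have h := exp_neg_sub_one_sub_div_pow_div_mem_Icc ht htn.2
      rw [indicator_of_mem htn, norm_of_nonneg h.1]
      exact h.2
    · rw [indicator_of_notMem htn, norm_zero]
      exact (exp_pos _).le
  · refine (ae_restrict_iff' measurableSet_Ioi).2 <| Eventually.of_forall fun t (ht : 0 < t) => ?_
    have hlim := ((tendsto_one_add_div_pow_exp (-t)).const_sub (exp (-t))).div_const t
    simp only [sub_self, zero_div, neg_div, ← sub_eq_add_neg] at hlim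
    refine hlim.congr' ?_
    filter_upwards [eventually_ge_atTop ⌈t⌉₊] with n hn
    rw [indicator_of_mem (show t ∈ Ioc 0 (n : ℝ) from
      ⟨ht, (Nat.le_ceil t).trans (by exact_mod_cast hn)⟩)]

lemma eulerMascheroniConstant_eq_Ein_sub_integral :
    eulerMascheroniConstant = Ein 1 - ∫ t in Ioi 1, exp (-t) / t := by
  refine tendsto_nhds_unique tendsto_harmonic_sub_log ?_
  have hsum := tendsto_harmonic_sub_Ein.add
    (tendsto_Ein_sub_log_atTop_integral.comp tendsto_natCast_atTop_atTop)
  rw [zero_add] at hsum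
  refine hsum.congr fun n => ?_
  simp only [Function.comp_apply]
  ring

lemma tendsto_Ein_sub_log_atTop :
    Tendsto (fun s => Ein s - log s) atTop (𝓝 eulerMascheroniConstant) :=
  eulerMascheroniConstant_eq_Ein_sub_integral ▸ tendsto_Ein_sub_log_atTop_integral

noncomputable def laplaceTransform (f : ℝ → ℝ) (s : ℝ) : ℝ :=
  ∫ u in Ioi 0, exp (-s * u) * f u

section Laplace

lemma mul_exp_neg_mul_le {s : ℝ} (hs : 0 < s) (u : ℝ) : u * exp (-s * u) ≤ s⁻¹ :=
  calc u * exp (-s * u) = s * u * exp (-s * u) / s := by field_simp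
    _ ≤ exp (s * u) * exp (-s * u) / s := by gcongr; linarith [add_one_le_exp (s * u)]
    _ = s⁻¹ := by rw [← exp_add, neg_mul, add_neg_cancel, exp_zero, one_div]

lemma hasDerivAt_exp_neg_mul (s x : ℝ) :
    HasDerivAt (fun x => exp (-s * x)) (-s * exp (-s * x)) x :=
  ((hasDerivAt_id' x).const_mul (-s)).exp.congr_deriv (by ring)

variable {f : ℝ → ℝ}

lemma integrableOn_exp_neg_mul_mul (hf : IntegrableOn f (Ioi 0)) {s : ℝ} (hs : 0 ≤ s) :
    IntegrableOn (fun u => exp (-s * u) * f u) (Ioi 0) := by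
  refine hf.bdd_mul (c := 1)
    (by fun_prop : Continuous fun u => exp (-s * u)).aestronglyMeasurable ?_
  refine (ae_restrict_iff' measurableSet_Ioi).2 (Eventually.of_forall fun u (hu : 0 < u) => ?_)
  rw [norm_of_nonneg (exp_pos _).le, exp_le_one_iff]
  nlinarith

lemma integrableOn_mul_exp_neg_mul_mul (hf : IntegrableOn f (Ioi 0)) {s : ℝ} (hs : 0 < s) :
    IntegrableOn (fun u => u * exp (-s * u) * f u) (Ioi 0) := by
  refine hf.bdd_mul (c := s⁻¹)
    (by fun_prop : Continuous fun u => u * exp (-s * u)).aestronglyMeasurable ?_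
  refine (ae_restrict_iff' measurableSet_Ioi).2 (Eventually.of_forall fun u (hu : 0 < u) => ?_)
  rw [norm_of_nonneg (by positivity)]
  exact mul_exp_neg_mul_le hs u

lemma hasDerivAt_laplaceTransform (hf : IntegrableOn f (Ioi 0)) {s : ℝ} (hs : 0 < s) :
    HasDerivAt (laplaceTransform f) (-∫ u in Ioi 0, u * exp (-s * u) * f u) s := by
  have hball : ∀ x ∈ Metric.ball s (s / 2), s / 2 < x := fun x hx => by
    rw [Metric.mem_ball, Real.dist_eq, abs_lt] at hx; linarith
  have hderiv := hasDerivAt_integral_of_dominated_loc_of_deriv_le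
    (F := fun x u => exp (-x * u) * f u) (F' := fun x u => -(u * exp (-x * u) * f u))
    (bound := fun u => (s / 2)⁻¹ * ‖f u‖) (Metric.ball_mem_nhds s (half_pos hs))
    (Eventually.of_forall fun x =>
      (by fun_prop : Continuous fun u => exp (-x * u)).aestronglyMeasurable.mul hf.1)
    (integrableOn_exp_neg_mul_mul hf hs.le)
    ((by fun_prop : Continuous fun u => u * exp (-s * u)).aestronglyMeasurable.mul hf.1).neg
    ((ae_restrict_iff' measurableSet_Ioi).2 <| Eventually.of_forall fun u (hu : 0 < u) x hx => by
      rw [norm_neg, norm_mul, norm_of_nonneg (by positivity : 0 ≤ u * exp (-x * u))]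
      gcongr
      calc u * exp (-x * u) ≤ u * exp (-(s / 2) * u) := by gcongr; nlinarith [hball x hx]
        _ ≤ (s / 2)⁻¹ := mul_exp_neg_mul_le (half_pos hs) u)
    (hf.norm.const_mul _)
    (Eventually.of_forall fun u x _ => by
      refine ((((hasDerivAt_neg' x).mul_const u).exp).mul_const (f u)).congr_deriv ?_
      ring)
  rw [← integral_neg]
  exact hderiv.2

lemma tendsto_laplaceTransform_nhdsGT_zero (hf : IntegrableOn f (Ioi 0)) :
    Tendsto (laplaceTransform f) (𝓝[>] 0) (𝓝 (∫ u in Ioi 0, f u)) := by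
  refine tendsto_integral_filter_of_dominated_convergence (fun u => ‖f u‖)
    (Eventually.of_forall fun x =>
      (by fun_prop : Continuous fun u => exp (-x * u)).aestronglyMeasurable.mul hf.1)
    ?_ hf.norm ?_
  · filter_upwards [self_mem_nhdsWithin] with x (hx : 0 < x)
    refine (ae_restrict_iff' measurableSet_Ioi).2 (Eventually.of_forall fun u (hu : 0 < u) => ?_)
    rw [norm_mul, norm_of_nonneg (exp_pos _).le]
    exact mul_le_of_le_one_left (norm_nonneg _) (exp_le_one_iff.2 (by nlinarith))
  · refine Eventually.of_forall fun u => tendsto_nhdsWithin_of_tendsto_nhds ?_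
    simpa using ((by fun_prop : Continuous fun x : ℝ => exp (-x * u) * f u).tendsto 0)

lemma tendsto_mul_laplaceTransform_atTop (hf : Measurable f) {C a : ℝ}
    (hbound : ∀ u, 0 < u → ‖f u‖ ≤ C) (hlim : Tendsto f (𝓝[>] 0) (𝓝 a)) :
    Tendsto (fun s => s * laplaceTransform f s) atTop (𝓝 a) := by
  have hscale : ∀ s > 0, s * laplaceTransform f s = ∫ v in Ioi 0, exp (-v) * f (v / s) :=
    fun s hs => by
      have := integral_comp_mul_left_Ioi (fun v => exp (-v) * f (v / s)) 0 hs
      simp only [mul_zero, mul_div_cancel_left₀ _ hs.ne', smul_eq_mul] at this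
      rw [laplaceTransform,
        ← mul_inv_cancel_left₀ hs.ne' (∫ v in Ioi 0, exp (-v) * f (v / s)), ← this]
      simp only [neg_mul]
  have hexp : IntegrableOn (fun v => exp (-v)) (Ioi (0 : ℝ)) := by
    simpa using exp_neg_integrableOn_Ioi 0 one_pos
  have hdct : Tendsto (fun s => ∫ v in Ioi 0, exp (-v) * f (v / s)) atTop
      (𝓝 (∫ v in Ioi 0, exp (-v) * a)) := by
    refine tendsto_integral_filter_of_dominated_convergence (fun v => exp (-v) * C)
      (Eventually.of_forall fun s =>
        (by fun_prop : Measurable fun v => exp (-v) * f (v / s)).aestronglyMeasurable)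
      ?_ (hexp.mul_const C) ?_
    · filter_upwards [eventually_gt_atTop 0] with s hs
      refine (ae_restrict_iff' measurableSet_Ioi).2 (Eventually.of_forall fun v (hv : 0 < v) => ?_)
      rw [norm_mul, norm_of_nonneg (exp_pos _).le]
      exact mul_le_mul_of_nonneg_left (hbound _ (by positivity)) (exp_pos _).le
    · refine (ae_restrict_iff' measurableSet_Ioi).2 (Eventually.of_forall fun v (hv : 0 < v) => ?_)
      refine (hlim.comp (tendsto_nhdsWithin_iff.2 ⟨?_, ?_⟩)).const_mul (exp (-v))
      · exact tendsto_const_nhds.div_atTop tendsto_id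
      · filter_upwards [eventually_gt_atTop 0] with s hs using div_pos hv hs
  rw [integral_mul_const, integral_exp_neg_Ioi_zero, one_mul] at hdct
  exact hdct.congr' (by filter_upwards [eventually_gt_atTop 0] with s hs using (hscale s hs).symm)

lemma integral_Ioi_exp_neg_mul_mul_sub (s a : ℝ) :
    ∫ u in Ioi a, exp (-s * u) * f (u - a) = exp (-s * a) * laplaceTransform f s := by
  have := (measurePreserving_add_right volume a).setIntegral_preimage_emb
    (measurableEmbedding_addRight a) (fun u => exp (-s * u) * f (u - a)) (Ioi a)
  rw [← this, laplaceTransform, ← integral_const_mul]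
  simp only [preimage_add_const_Ioi, sub_self, add_sub_cancel_right, mul_add, neg_mul, exp_add]
  congr with u
  ring

end Laplace

structure IsDickmanFunction (ρ : ℝ → ℝ) : Prop where
  continuous : Continuous ρ
  eq_one : ∀ x : ℝ, x ≤ 1 → ρ x = 1
  differentiableAt : ∀ x : ℝ, 1 < x → DifferentiableAt ℝ ρ x
  mul_deriv_eq : ∀ x : ℝ, 1 < x → x * deriv ρ x = -ρ (x - 1)

namespace IsDickmanFunction

variable {ρ : ℝ → ℝ} (hρ : IsDickmanFunction ρ)
include hρ

lemma hasDerivAt_mul_self {x : ℝ} (hx : 1 < x) :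
    HasDerivAt (fun y => y * ρ y) (ρ x - ρ (x - 1)) x := by
  refine ((hasDerivAt_id' x).fun_mul (hρ.differentiableAt x hx).hasDerivAt).congr_deriv ?_
  linarith [hρ.mul_deriv_eq x hx]

lemma integral_zero_one_eq_one : ∫ t in (0 : ℝ)..1, ρ t = 1 := by
  rw [intervalIntegral.integral_congr (g := fun _ => (1 : ℝ)) fun t ht =>
    hρ.eq_one t (by rw [uIcc_of_le zero_le_one] at ht; exact ht.2)]
  norm_num

lemma mul_eq_integral {x : ℝ} (hx : 1 ≤ x) : x * ρ x = ∫ t in (x - 1)..x, ρ t := by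
  have hc := hρ.continuous
  have hint : ∀ a b : ℝ, IntervalIntegrable ρ volume a b := hc.intervalIntegrable
  have hftc := intervalIntegral.integral_eq_sub_of_hasDerivAt_of_le hx
    (by fun_prop : Continuous fun y => y * ρ y).continuousOn
    (fun y hy => hρ.hasDerivAt_mul_self hy.1)
    ((by fun_prop : Continuous fun y => ρ y - ρ (y - 1)).intervalIntegrable 1 x)
  rw [intervalIntegral.integral_sub (hint _ _)
      ((by fun_prop : Continuous fun y => ρ (y - 1)).intervalIntegrable 1 x),
    intervalIntegral.integral_comp_sub_right, sub_self,
    intervalIntegral.integral_interval_sub_interval_comm (hint _ _) (hint _ _) (hint _ _),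
    intervalIntegral.integral_symm 0 1, intervalIntegral.integral_symm (x - 1) x,
    hρ.integral_zero_one_eq_one, one_mul, hρ.eq_one 1 le_rfl] at hftc
  linarith

lemma pos (x : ℝ) : 0 < ρ x := by
  -- at the first zero `x₀` of `ρ`, `x₀ ρ(x₀) = ∫_{x₀-1}^{x₀} ρ > 0`
  by_contra! hx
  set S := {y | ρ y ≤ 0}
  have hS : ∀ y ∈ S, 1 < y := fun y hy => by
    by_contra! h
    have : ρ y ≤ 0 := hy
    linarith [hρ.eq_one y h]
  have hbdd : BddBelow S := ⟨1, fun y hy => (hS y hy).le⟩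
  have hmem : sInf S ∈ S :=
    (isClosed_le hρ.continuous continuous_const).csInf_mem ⟨x, hx⟩ hbdd
  have hbelow : ∀ y < sInf S, 0 < ρ y := fun y hy => by
    by_contra! h
    exact hy.not_ge (csInf_le hbdd h)
  have hint_pos : 0 < ∫ t in (sInf S - 1)..sInf S, ρ t :=
    intervalIntegral.intervalIntegral_pos_of_pos_on (hρ.continuous.intervalIntegrable _ _)
      (fun t ht => hbelow t ht.2) (by linarith)
  rw [← hρ.mul_eq_integral (hS _ hmem).le] at hint_pos
  have : ρ (sInf S) ≤ 0 := hmem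
  nlinarith [hS _ hmem]

lemma antitone : Antitone ρ := by
  refine AntitoneOn.Iic_union_Ici (a := 1) (fun x hx y hy _ => ?_) ?_
  · rw [hρ.eq_one x hx, hρ.eq_one y hy]
  refine antitoneOn_of_deriv_nonpos (convex_Ici 1) hρ.continuous.continuousOn
    (fun x hx => ?_) fun x hx => ?_ <;> rw [interior_Ici, mem_Ioi] at hx
  · exact (hρ.differentiableAt x hx).differentiableWithinAt
  · nlinarith [hρ.mul_deriv_eq x hx, hρ.pos (x - 1)]

lemma le_one (x : ℝ) : ρ x ≤ 1 :=
  (hρ.antitone (min_le_left x 1)).trans_eq (hρ.eq_one _ (min_le_right x 1))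

lemma mul_le_sub_one {x : ℝ} (hx : 1 ≤ x) : x * ρ x ≤ ρ (x - 1) := by
  rw [hρ.mul_eq_integral hx]
  calc ∫ t in (x - 1)..x, ρ t ≤ ∫ _ in (x - 1)..x, ρ (x - 1) :=
        intervalIntegral.integral_mono_on (by linarith) (hρ.continuous.intervalIntegrable _ _)
          intervalIntegrable_const fun t ht => hρ.antitone ht.1
    _ = ρ (x - 1) := by simp

lemma le_two_div_sq {x : ℝ} (hx : 2 ≤ x) : ρ x ≤ 2 / x ^ 2 := by
  have h1 := hρ.mul_le_sub_one (x := x) (by linarith)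
  have h2 := hρ.mul_le_sub_one (x := x - 1) (by linarith)
  have h3 := hρ.le_one (x - 1 - 1)
  have h4 := hρ.pos x
  rw [le_div_iff₀ (by positivity)]
  nlinarith [mul_le_mul_of_nonneg_left h1 (by linarith : (0 : ℝ) ≤ x - 1),
    mul_nonneg (mul_nonneg (by linarith : (0 : ℝ) ≤ x - 2) (by linarith : (0 : ℝ) ≤ x))
      h4.le]

lemma integrableOn_Ioi : IntegrableOn ρ (Ioi 0) := by
  have hdecay : IntegrableOn (fun x : ℝ => 2 * x ^ (-2 : ℝ)) (Ioi 2) :=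
    (integrableOn_Ioi_rpow_of_lt (by norm_num) (by norm_num)).const_mul 2
  refine (Ioc_union_Ioi_eq_Ioi (zero_le_two (α := ℝ))) ▸
    (hρ.continuous.integrableOn_Icc.mono_set Ioc_subset_Icc_self).union ?_
  refine hdecay.mono' hρ.continuous.aestronglyMeasurable ?_
  rw [ae_restrict_iff' measurableSet_Ioi]
  filter_upwards with x (hx : 2 < x)
  rw [norm_of_nonneg (hρ.pos x).le, rpow_neg (by linarith), rpow_two, ← div_eq_mul_inv]
  exact hρ.le_two_div_sq hx.le

lemma laplaceTransform_pos {s : ℝ} (hs : 0 ≤ s) : 0 < laplaceTransform ρ s := by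
  have hint := integrableOn_exp_neg_mul_mul hρ.integrableOn_Ioi hs
  rw [laplaceTransform, ← intervalIntegral.integral_interval_add_Ioi hint
    (hint.mono_set (Ioi_subset_Ioi zero_le_one))]
  refine add_pos_of_pos_of_nonneg ?_ (setIntegral_nonneg measurableSet_Ioi fun u _ =>
    mul_nonneg (exp_pos _).le (hρ.pos u).le)
  exact intervalIntegral.intervalIntegral_pos_of_pos_on
    (((by fun_prop : Continuous fun u => exp (-s * u)).mul hρ.continuous).intervalIntegrable _ _)
    (fun u _ => mul_pos (exp_pos _) (hρ.pos u)) one_pos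

lemma mul_integral_zero_one_mul_exp (s : ℝ) :
    s * ∫ u in (0 : ℝ)..1, u * exp (-s * u) * ρ u =
      (∫ u in (0 : ℝ)..1, exp (-s * u) * ρ u) - exp (-s) := by
  have hρ_one : ∀ u ∈ uIcc (0 : ℝ) 1, ρ u = 1 := fun u hu =>
    hρ.eq_one u (by rw [uIcc_of_le zero_le_one] at hu; exact hu.2)
  have hparts := intervalIntegral.integral_mul_deriv_eq_deriv_mul (a := 0) (b := 1)
    (fun x _ => hasDerivAt_exp_neg_mul s x) (fun x _ => hasDerivAt_id' x)
    ((by fun_prop : Continuous fun x => -s * exp (-s * x)).intervalIntegrable _ _)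
    intervalIntegrable_const
  have hparts' : ∫ x in (0 : ℝ)..1, -s * exp (-s * x) * x =
      -s * ∫ x in (0 : ℝ)..1, x * exp (-s * x) := by
    rw [← intervalIntegral.integral_const_mul]
    congr with x
    ring
  have hlhs :
      ∫ u in (0 : ℝ)..1, u * exp (-s * u) * ρ u = ∫ u in (0 : ℝ)..1, u * exp (-s * u) :=
    intervalIntegral.integral_congr fun u hu => by simp only [hρ_one u hu, mul_one]
  have hrhs :
      ∫ u in (0 : ℝ)..1, exp (-s * u) * ρ u = ∫ u in (0 : ℝ)..1, exp (-s * u) * 1 :=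
    intervalIntegral.integral_congr fun u hu => by simp only [hρ_one u hu]
  rw [hlhs, hrhs, hparts, hparts']
  simp only [mul_one, mul_zero, exp_zero]
  ring

lemma tendsto_exp_neg_mul_mul_mul_self_atTop {s : ℝ} (hs : 0 < s) :
    Tendsto (fun x => exp (-s * x) * (x * ρ x)) atTop (𝓝 0) := by
  have hexp : Tendsto (fun x => exp (-s * x)) atTop (𝓝 0) := by
    simpa only [Function.comp_def, id, neg_mul] using
      tendsto_exp_neg_atTop_nhds_zero.comp (tendsto_id.const_mul_atTop hs)
  refine squeeze_zero' ?_ ?_ hexp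
  · filter_upwards [eventually_ge_atTop 0] with x hx
    exact mul_nonneg (exp_pos _).le (mul_nonneg hx (hρ.pos x).le)
  · filter_upwards [eventually_ge_atTop 1] with x hx
    exact mul_le_of_le_one_right (exp_pos _).le ((hρ.mul_le_sub_one hx).trans (hρ.le_one _))

lemma mul_integral_Ioi_one_mul_exp {s : ℝ} (hs : 0 < s) :
    s * ∫ u in Ioi 1, u * exp (-s * u) * ρ u =
      exp (-s) + (∫ u in Ioi 1, exp (-s * u) * ρ u) - exp (-s) * laplaceTransform ρ s := by
  have hexp_int : IntegrableOn (fun x => exp (-s * x)) (Ioi 1) := exp_neg_integrableOn_Ioi 1 hs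
  have hint : IntegrableOn (fun u => exp (-s * u) * ρ u) (Ioi 1) :=
    (integrableOn_exp_neg_mul_mul hρ.integrableOn_Ioi hs.le).mono_set (Ioi_subset_Ioi zero_le_one)
  have hint_shift : IntegrableOn (fun u => exp (-s * u) * ρ (u - 1)) (Ioi 1) :=
    hexp_int.mul_bdd (c := 1) (hρ.continuous.comp (continuous_sub_right 1)).aestronglyMeasurable
      (Eventually.of_forall fun u => by
        rw [norm_of_nonneg (hρ.pos _).le]; exact hρ.le_one _)
  have hdiff_int : IntegrableOn (fun x => exp (-s * x) * (ρ x - ρ (x - 1))) (Ioi 1) :=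
    (hint.sub hint_shift).congr_fun (fun x _ => by simp only [Pi.sub_apply]; ring)
      measurableSet_Ioi
  have hmul_int : IntegrableOn (fun x => -s * exp (-s * x) * (x * ρ x)) (Ioi 1) :=
    IntegrableOn.congr_fun (((integrableOn_mul_exp_neg_mul_mul hρ.integrableOn_Ioi hs).mono_set
      (Ioi_subset_Ioi zero_le_one)).const_mul (-s)) (fun x _ => by ring) measurableSet_Ioi
  have hcont : Continuous fun x => exp (-s * x) * (x * ρ x) := by
    have := hρ.continuous; fun_prop
  -- integrate `e^{-su}` against `(u ρ(u))' = ρ(u) - ρ(u - 1)` by parts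
  have hparts := integral_Ioi_mul_deriv_eq_deriv_mul (a := 1) (u := fun x => exp (-s * x))
    (v := fun x => x * ρ x) (v' := fun x => ρ x - ρ (x - 1))
    (fun x _ => hasDerivAt_exp_neg_mul s x) (fun x hx => hρ.hasDerivAt_mul_self hx) hdiff_int
    hmul_int (hcont.continuousAt.tendsto.mono_left nhdsWithin_le_nhds)
    (hρ.tendsto_exp_neg_mul_mul_mul_self_atTop hs)
  have hsplit : ∫ x in Ioi 1, exp (-s * x) * (ρ x - ρ (x - 1)) =
      (∫ x in Ioi 1, exp (-s * x) * ρ x) - ∫ x in Ioi 1, exp (-s * x) * ρ (x - 1) := by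
    rw [← integral_sub hint hint_shift]
    congr with x
    ring
  have hpull : ∫ x in Ioi 1, -s * exp (-s * x) * (x * ρ x) =
      -s * ∫ x in Ioi 1, x * exp (-s * x) * ρ x := by
    rw [← integral_const_mul]
    congr with x
    ring
  rw [hsplit, hpull, integral_Ioi_exp_neg_mul_mul_sub, hρ.eq_one 1 le_rfl, mul_one, one_mul,
    mul_one] at hparts
  linarith

lemma mul_integral_mul_exp_eq {s : ℝ} (hs : 0 < s) :
    s * ∫ u in Ioi 0, u * exp (-s * u) * ρ u = (1 - exp (-s)) * laplaceTransform ρ s := by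
  have hmul := integrableOn_mul_exp_neg_mul_mul hρ.integrableOn_Ioi hs
  have hexp := integrableOn_exp_neg_mul_mul hρ.integrableOn_Ioi hs.le
  have hsub : Ioi (1 : ℝ) ⊆ Ioi 0 := Ioi_subset_Ioi zero_le_one
  have hsplit : laplaceTransform ρ s =
      (∫ u in (0 : ℝ)..1, exp (-s * u) * ρ u) + ∫ u in Ioi 1, exp (-s * u) * ρ u :=
    (intervalIntegral.integral_interval_add_Ioi hexp (hexp.mono_set hsub)).symm
  rw [← intervalIntegral.integral_interval_add_Ioi hmul (hmul.mono_set hsub), mul_add,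
    hρ.mul_integral_zero_one_mul_exp, hρ.mul_integral_Ioi_one_mul_exp hs, hsplit]
  ring

lemma hasDerivAt_log_laplaceTransform_add_Ein {s : ℝ} (hs : 0 < s) :
    HasDerivAt (fun s => log (laplaceTransform ρ s) + Ein s) 0 s := by
  have hL := hρ.laplaceTransform_pos hs.le
  refine (((hasDerivAt_laplaceTransform hρ.integrableOn_Ioi hs).log hL.ne').add
    (hasDerivAt_Ein hs)).congr_deriv ?_
  rw [div_add_div _ _ hL.ne' hs.ne']
  exact div_eq_zero_iff.2 (Or.inl (by linear_combination -hρ.mul_integral_mul_exp_eq hs))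

lemma tendsto_log_laplaceTransform_add_Ein_atTop :
    Tendsto (fun s => log (laplaceTransform ρ s) + Ein s) atTop
      (𝓝 eulerMascheroniConstant) := by
  have hρ_zero : Tendsto ρ (𝓝[>] 0) (𝓝 1) := by
    rw [← hρ.eq_one 0 zero_le_one]
    exact hρ.continuous.continuousAt.tendsto.mono_left nhdsWithin_le_nhds
  have hmul := tendsto_mul_laplaceTransform_atTop hρ.continuous.measurable
    (fun u _ => by rw [norm_of_nonneg (hρ.pos u).le]; exact hρ.le_one u) hρ_zero
  have hlim := ((continuousAt_log one_ne_zero).tendsto.comp hmul).add tendsto_Ein_sub_log_atTop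
  rw [log_one, zero_add] at hlim
  refine hlim.congr' ?_
  filter_upwards [eventually_gt_atTop 0] with s hs
  rw [Function.comp_apply, log_mul hs.ne' (hρ.laplaceTransform_pos hs.le).ne']
  ring

lemma log_laplaceTransform_add_Ein {s : ℝ} (hs : 0 < s) :
    log (laplaceTransform ρ s) + Ein s = eulerMascheroniConstant := by
  have hderiv := fun x (hx : 0 < x) => hρ.hasDerivAt_log_laplaceTransform_add_Ein hx
  have hconst : ∀ t ∈ Ioi (0 : ℝ), log (laplaceTransform ρ t) + Ein t =
      log (laplaceTransform ρ s) + Ein s := fun t ht =>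
    isOpen_Ioi.is_const_of_deriv_eq_zero isPreconnected_Ioi
      (fun x hx => (hderiv x hx).differentiableAt.differentiableWithinAt)
      (fun x hx => (hderiv x hx).deriv) ht hs
  exact tendsto_nhds_unique (tendsto_const_nhds.congr' (eventually_gt_atTop 0 |>.mono
    fun t ht => (hconst t ht).symm)) hρ.tendsto_log_laplaceTransform_add_Ein_atTop

lemma laplaceTransform_eq_exp {s : ℝ} (hs : 0 < s) :
    laplaceTransform ρ s = exp (eulerMascheroniConstant - Ein s) := by
  rw [← hρ.log_laplaceTransform_add_Ein hs, add_sub_cancel_right,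
    exp_log (hρ.laplaceTransform_pos hs.le)]

end IsDickmanFunction

/-- Let `ρ` be the Dickman function. Then `∫_{0}^{∞} ρ(u) du = e^{γ}`. -/
theorem dickman_integral_eq_exp_gamma
    (ρ : ℝ → ℝ) (hρc : Continuous ρ)
    (hρ1 : ∀ x : ℝ, x ≤ 1 → ρ x = 1)
    (hρdiff : ∀ x : ℝ, 1 < x → DifferentiableAt ℝ ρ x)
    (hρeq : ∀ x : ℝ, 1 < x → x * deriv ρ x = -ρ (x - 1)) :
    ∫ u in Set.Ioi (0 : ℝ), ρ u = Real.exp Real.eulerMascheroniConstant := by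
  have hρ : IsDickmanFunction ρ := ⟨hρc, hρ1, hρdiff, hρeq⟩
  have hlim : Tendsto (fun s => exp (eulerMascheroniConstant - Ein s)) (𝓝[>] 0)
      (𝓝 (exp eulerMascheroniConstant)) := by
    simpa [Function.comp_def] using
      (continuous_exp.tendsto _).comp (tendsto_Ein_nhdsGT_zero.const_sub _)
  refine tendsto_nhds_unique (tendsto_laplaceTransform_nhdsGT_zero hρ.integrableOn_Ioi)
    (hlim.congr' ?_)
  filter_upwards [self_mem_nhdsWithin] with s hs using (hρ.laplaceTransform_eq_exp hs).symm
end

section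
/- Fix n ≥ 1 and let ν be a Borel probability measure on [0,∞) whose moment generating function satisfies ∫ e^{t x} dν(x) = 1 + t ∏_{k=1}^{n} (k−t)^{(−1)^k C(n,k)} for all t < 1. Then its mean is ∫ x dν(x) = exp( ∑_{i=1}^{n} C(n,i)(−1)^i log i ) = ∏_{k=1}^{n} k^{(−1)^k C(n,k)}, and its second moment is ∫ x² dν(x) = 2 · ( ∏_{k=1}^{n} k^{(−1)^k C(n,k)} ) · ∑_{i=1}^{n} C(n,i) (−1)^{i+1}/i, where ∑_{i=1}^{n} C(n,i)(−1)^{i+1}/i equals the harmonic number H_n = ∑_{k=1}^{n} 1/k. -/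
/-!
Write `g t = ∏ (k - t) ^ ((-1)^k C(n,k))`. An integrand that is not integrable has integral `0`,
so the hypothesis forces `exp (t x)` to be integrable wherever `1 + t g t ≠ 0`, in particular on a
neighbourhood of `0`. There the moments are the derivatives of the moment generating function
`1 + t g t` at `0`: by Leibniz' rule they are `g 0` and `2 g' 0`, and the logarithmic derivative
of the product gives `g' 0 = g 0 · ∑ C(n,k) (-1)^(k+1) / k`. This alternating sum is the harmonic
number, by induction on `n` through Pascal's rule.
-/

open Finset MeasureTheory ProbabilityTheory Real Filter Topology

theorem iteratedDeriv_succ_one_add_mul_self {𝕜 : Type*} [NontriviallyNormedField 𝕜]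
    {g : 𝕜 → 𝕜} {m : ℕ} (hg : ContDiffAt 𝕜 (m + 1 : ℕ) g 0) :
    iteratedDeriv (m + 1) (fun t ↦ 1 + t * g t) 0 = (m + 1) * iteratedDeriv m g 0 := by
  rw [iteratedDeriv_const_add (by omega), iteratedDeriv_fun_mul (by fun_prop) hg,
    sum_range_succ', sum_range_succ']
  simp [iteratedDeriv_fun_id_zero]

theorem zero_mem_interior_integrableExpSet_of_eventually_mgf_ne_zero {Ω : Type*}
    [MeasurableSpace Ω] {μ : Measure Ω} {X : Ω → ℝ} (h : ∀ᶠ t in 𝓝 0, mgf X μ t ≠ 0) :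
    0 ∈ interior (integrableExpSet X μ) := by
  rw [mem_interior_iff_mem_nhds]
  filter_upwards [h] with t ht
  by_contra hint
  exact ht (integral_undef hint)

theorem prod_zpow_eq_exp_sum_mul_log {ι : Type*} {s : Finset ι} {x : ι → ℝ}
    (hx : ∀ i ∈ s, 0 < x i) (e : ι → ℤ) :
    ∏ i ∈ s, x i ^ e i = exp (∑ i ∈ s, e i * log (x i)) := by
  rw [exp_sum]
  exact prod_congr rfl fun i hi ↦ by rw [← rpow_intCast, rpow_def_of_pos (hx i hi), mul_comm]

theorem sum_Icc_choose_mul_neg_one_pow_succ {m : ℕ} (hm : m ≠ 0) :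
    ∑ i ∈ Icc 1 m, (m.choose i : ℝ) * (-1) ^ (i + 1) = 1 := by
  have h := Int.alternating_sum_range_choose_of_ne hm
  rw [range_eq_Ico, sum_eq_sum_Ico_succ_bot (by omega), Ico_add_one_right_eq_Icc] at h
  have h' : (1 : ℝ) + ∑ i ∈ Icc 1 m, (-1) ^ i * (m.choose i : ℝ) = 0 := by
    exact_mod_cast (by simpa using h)
  calc ∑ i ∈ Icc 1 m, (m.choose i : ℝ) * (-1) ^ (i + 1)
      = -∑ i ∈ Icc 1 m, (-1) ^ i * (m.choose i : ℝ) := by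
        rw [← sum_neg_distrib]
        exact sum_congr rfl fun i _ ↦ by ring
    _ = 1 := by linarith

theorem sum_Icc_choose_mul_neg_one_pow_div (n : ℕ) :
    ∑ i ∈ Icc 1 n, (n.choose i : ℝ) * (-1) ^ (i + 1) / i = ∑ k ∈ Icc 1 n, (1 : ℝ) / k := by
  induction n with
  | zero => simp
  | succ n ih =>
    have pascal : ∀ i ∈ Icc 1 (n + 1), ((n + 1).choose i : ℝ) * (-1) ^ (i + 1) / i
        = (n.choose i : ℝ) * (-1) ^ (i + 1) / i
          + ((n + 1).choose i : ℝ) * (-1) ^ (i + 1) / (n + 1) := by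
      intro i hi
      obtain ⟨j, rfl⟩ : ∃ j, i = j + 1 := ⟨i - 1, by grind⟩
      have h : ((n : ℝ) + 1) * n.choose j = (n + 1).choose (j + 1) * (j + 1) := by
        exact_mod_cast Nat.add_one_mul_choose_eq n j
      conv_lhs => rw [Nat.choose_succ_succ']
      push_cast
      field_simp
      linear_combination h
    rw [sum_congr rfl pascal, sum_add_distrib, ← sum_div,
      sum_Icc_choose_mul_neg_one_pow_succ n.succ_ne_zero, sum_Icc_succ_top (by omega),
      sum_Icc_succ_top (by omega), Nat.choose_succ_self, ih]
    push_cast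
    ring

noncomputable def alternatingBinomialProduct (n : ℕ) (t : ℝ) : ℝ :=
  ∏ k ∈ Icc 1 n, ((k : ℝ) - t) ^ ((-1 : ℤ) ^ k * (n.choose k : ℤ))

section alternatingBinomialProduct

variable (n : ℕ)

theorem natCast_sub_ne_zero_of_mem_Icc {k : ℕ} (hk : k ∈ Icc 1 n) {t : ℝ} (ht : t < 1) :
    (k : ℝ) - t ≠ 0 := by
  have : (1 : ℝ) ≤ k := by exact_mod_cast (mem_Icc.mp hk).1
  linarith

theorem analyticAt_alternatingBinomialProduct {t : ℝ} (ht : t < 1) :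
    AnalyticAt ℝ (alternatingBinomialProduct n) t :=
  Finset.analyticAt_fun_prod _ fun _ hk ↦
    AnalyticAt.zpow (by fun_prop) (natCast_sub_ne_zero_of_mem_Icc n hk ht)

theorem alternatingBinomialProduct_zero :
    alternatingBinomialProduct n 0 =
      ∏ k ∈ Icc 1 n, (k : ℝ) ^ ((-1 : ℤ) ^ k * (n.choose k : ℤ)) := by
  simp only [alternatingBinomialProduct, sub_zero]

theorem deriv_alternatingBinomialProduct_zero :
    deriv (alternatingBinomialProduct n) 0 =
      alternatingBinomialProduct n 0 * ∑ i ∈ Icc 1 n, (n.choose i : ℝ) * (-1) ^ (i + 1) / i := by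
  have hne : alternatingBinomialProduct n 0 ≠ 0 :=
    prod_ne_zero_iff.mpr fun k hk ↦ zpow_ne_zero _ (natCast_sub_ne_zero_of_mem_Icc n hk one_pos)
  have hlog : logDeriv (alternatingBinomialProduct n) 0 =
      ∑ i ∈ Icc 1 n, (n.choose i : ℝ) * (-1) ^ (i + 1) / i := by
    unfold alternatingBinomialProduct
    rw [logDeriv_prod (f := fun (k : ℕ) (t : ℝ) ↦ ((k : ℝ) - t) ^ ((-1 : ℤ) ^ k * (n.choose k : ℤ)))
        (fun k hk ↦ zpow_ne_zero _ (natCast_sub_ne_zero_of_mem_Icc n hk one_pos))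
        (fun k hk ↦ (AnalyticAt.zpow (by fun_prop)
          (natCast_sub_ne_zero_of_mem_Icc n hk one_pos)).differentiableAt)]
    refine sum_congr rfl fun k _ ↦ ?_
    rw [logDeriv_fun_zpow (by fun_prop), logDeriv_apply]
    simp only [deriv_const_sub_id', sub_zero]
    push_cast
    ring
  rw [← hlog, logDeriv_apply, mul_div_cancel₀ _ hne]

end alternatingBinomialProduct

theorem mean_and_second_moment_of_burnout_time_general
    (n : ℕ)
    (ν : Measure ℝ)
    (hmgf : ∀ t : ℝ, t < 1 →
      ∫ x, Real.exp (t * x) ∂ν =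
        1 + t * ∏ k ∈ Finset.Icc 1 n, ((k : ℝ) - t) ^ ((-1 : ℤ) ^ k * (n.choose k : ℤ))) :
    (∫ x, x ∂ν
        = Real.exp (∑ i ∈ Finset.Icc 1 n, (n.choose i : ℝ) * (-1 : ℝ) ^ i * Real.log i))
    ∧ (∫ x, x ∂ν = ∏ k ∈ Finset.Icc 1 n, (k : ℝ) ^ ((-1 : ℤ) ^ k * (n.choose k : ℤ)))
    ∧ (∫ x, x ^ 2 ∂ν
        = 2 * (∏ k ∈ Finset.Icc 1 n, (k : ℝ) ^ ((-1 : ℤ) ^ k * (n.choose k : ℤ)))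
            * ∑ i ∈ Finset.Icc 1 n, (n.choose i : ℝ) * (-1 : ℝ) ^ (i + 1) / (i : ℝ))
    ∧ (∑ i ∈ Finset.Icc 1 n, (n.choose i : ℝ) * (-1 : ℝ) ^ (i + 1) / (i : ℝ)
        = ∑ k ∈ Finset.Icc 1 n, (1 : ℝ) / (k : ℝ)) := by
  have hg : ContDiffAt ℝ 2 (alternatingBinomialProduct n) 0 :=
    (analyticAt_alternatingBinomialProduct n one_pos).contDiffAt
  have hmgf_eq : mgf id ν =ᶠ[𝓝 0] fun t ↦ 1 + t * alternatingBinomialProduct n t :=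
    eventually_of_mem (Iio_mem_nhds one_pos) fun t ht ↦ hmgf t ht
  have hint : 0 ∈ interior (integrableExpSet id ν) := by
    refine zero_mem_interior_integrableExpSet_of_eventually_mgf_ne_zero ?_
    have hcont : ContinuousAt (fun t ↦ 1 + t * alternatingBinomialProduct n t) 0 := by fun_prop
    filter_upwards [hmgf_eq, hcont.eventually_ne (y := 0) (by simp)] with t ht hne
    rwa [ht]
  have moment (m : ℕ) :
      ∫ x, x ^ m ∂ν = iteratedDeriv m (fun t ↦ 1 + t * alternatingBinomialProduct n t) 0 := by
    simpa using (iteratedDeriv_mgf_zero hint m).symm.trans (hmgf_eq.iteratedDeriv_eq m)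
  have mean : ∫ x, x ∂ν = ∏ k ∈ Icc 1 n, (k : ℝ) ^ ((-1 : ℤ) ^ k * (n.choose k : ℤ)) := by
    rw [← alternatingBinomialProduct_zero]
    simpa using (moment 1).trans (iteratedDeriv_succ_one_add_mul_self (m := 0) (hg.of_le (by simp)))
  have second : ∫ x, x ^ 2 ∂ν = 2 * deriv (alternatingBinomialProduct n) 0 := by
    simpa [one_add_one_eq_two] using
      (moment 2).trans (iteratedDeriv_succ_one_add_mul_self (m := 1) hg)
  refine ⟨?_, mean, ?_, sum_Icc_choose_mul_neg_one_pow_div n⟩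
  · rw [mean, prod_zpow_eq_exp_sum_mul_log fun k hk ↦ Nat.cast_pos.mpr (mem_Icc.mp hk).1]
    push_cast
    simp_rw [mul_comm]
  · rw [second, deriv_alternatingBinomialProduct_zero, alternatingBinomialProduct_zero, mul_assoc]

/-- Fix `n ≥ 1` and let `ν` be a Borel probability measure on `[0,∞)` whose
moment generating function is `t ↦ 1 + t ∏_{k=1}^{n} (k−t)^{(−1)^k C(n,k)}` for `t < 1`.
Then its mean is `exp(∑_{i=1}^{n} C(n,i)(−1)^i log i) = ∏_{k=1}^{n} k^{(−1)^k C(n,k)}`, and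
its second moment is `2 · (∏_{k=1}^{n} k^{(−1)^k C(n,k)}) · ∑_{i=1}^{n} C(n,i)(−1)^{i+1}/i`,
where moreover `∑_{i=1}^{n} C(n,i)(−1)^{i+1}/i = H_n = ∑_{k=1}^{n} 1/k`. -/
theorem mean_and_second_moment_of_burnout_time
    (n : ℕ) (hn : 1 ≤ n)
    (ν : Measure ℝ) (hprob : IsProbabilityMeasure ν)
    (hsupp : ν (Set.Iio 0) = 0)
    (hmgf : ∀ t : ℝ, t < 1 →
      ∫ x, Real.exp (t * x) ∂ν =
        1 + t * ∏ k ∈ Finset.Icc 1 n, ((k : ℝ) - t) ^ ((-1 : ℤ) ^ k * (n.choose k : ℤ))) :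
    (∫ x, x ∂ν
        = Real.exp (∑ i ∈ Finset.Icc 1 n, (n.choose i : ℝ) * (-1 : ℝ) ^ i * Real.log i))
    ∧ (∫ x, x ∂ν = ∏ k ∈ Finset.Icc 1 n, (k : ℝ) ^ ((-1 : ℤ) ^ k * (n.choose k : ℤ)))
    ∧ (∫ x, x ^ 2 ∂ν
        = 2 * (∏ k ∈ Finset.Icc 1 n, (k : ℝ) ^ ((-1 : ℤ) ^ k * (n.choose k : ℤ)))
            * ∑ i ∈ Finset.Icc 1 n, (n.choose i : ℝ) * (-1 : ℝ) ^ (i + 1) / (i : ℝ))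
    ∧ (∑ i ∈ Finset.Icc 1 n, (n.choose i : ℝ) * (-1 : ℝ) ^ (i + 1) / (i : ℝ)
        = ∑ k ∈ Finset.Icc 1 n, (1 : ℝ) / (k : ℝ)) :=
  mean_and_second_moment_of_burnout_time_general n ν hmgf
end

section
/- For every integer n ≥ 1, ∑_{i=1}^{n+1} C(n+1,i) (−1)^i log i = ∫_{0}^{1} [ 1/x − n!/(x(x+1)(x+2)⋯(x+n)) ] dx. -/
/-!
Partial fractions give `n! / (x (x+1) ⋯ (x+n)) = ∑ⱼ (-1)ʲ C(n,j) / (x+j)`. The `j = 0` term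
cancels `1/x`, so the integrand is `∑_{j ≥ 1} (-1)^(j+1) C(n,j) / (x+j)`, which integrates
termwise to `∑_{j ≥ 1} (-1)^(j+1) C(n,j) (log (j+1) - log j)`. Pascal's rule, in the form of
the summation by parts `∑ᵢ (-1)ⁱ C(n+1,i) f i = ∑ᵢ (-1)ⁱ C(n,i) (f i - f (i+1))`, turns this into
the left-hand side; the same identity proves the partial fraction expansion by induction on `n`.
-/

open Finset MeasureTheory

open Nat in
theorem sum_range_succ_alternating_choose_mul {R : Type*} [CommRing R] (n : ℕ) (f : ℕ → R) :
    ∑ i ∈ range (n + 2), (-1) ^ i * ((n + 1).choose i : R) * f i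
      = ∑ i ∈ range (n + 1), (-1) ^ i * (n.choose i : R) * (f i - f (i + 1)) := by
  have shifted : ∑ i ∈ range (n + 1), (-1) ^ (i + 1) * (n.choose (i + 1) : R) * f (i + 1) + f 0
      = ∑ i ∈ range (n + 1), (-1) ^ i * (n.choose i : R) * f i := by
    rw [sum_range_succ _ n, choose_succ_self, sum_range_succ' _ n]
    simp
  calc _ = ∑ i ∈ range (n + 1), (-1) ^ (i + 1) * (n.choose (i + 1) : R) * f (i + 1) + f 0
        - ∑ i ∈ range (n + 1), (-1) ^ i * (n.choose i : R) * f (i + 1) := by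
        simp only [sum_range_succ' _ (n + 1), choose_succ_succ, cast_add, mul_add, add_mul,
          sum_add_distrib, pow_succ, mul_neg, mul_one, neg_mul, sum_neg_distrib, pow_zero,
          choose_zero_right, cast_one, one_mul]
        ring
    _ = _ := by rw [shifted, ← sum_sub_distrib]; simp only [mul_sub]

open Nat in
theorem factorial_div_prod_range_add_eq_sum {K : Type*} [Field K] (n : ℕ) (x : K)
    (hx : ∀ j ≤ n, x + j ≠ 0) :
    (n ! : K) / ∏ j ∈ range (n + 1), (x + j)
      = ∑ j ∈ range (n + 1), (-1) ^ j * (n.choose j : K) * (x + j)⁻¹ := by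
  induction n generalizing x with
  | zero => simp
  | succ n ih =>
    have hx_succ : ∀ j ≤ n, x + 1 + j ≠ 0 := fun j hj ↦ by
      simpa [add_assoc, add_comm 1 (j : K)] using hx (j + 1) (by omega)
    have hP : ∏ j ∈ range (n + 1), (x + j) ≠ 0 :=
      prod_ne_zero_iff.2 fun j hj ↦ hx j (by simp at hj; omega)
    have hP_succ : ∏ j ∈ range (n + 1), (x + 1 + j) ≠ 0 :=
      prod_ne_zero_iff.2 fun j hj ↦ hx_succ j (by simp at hj; omega)
    have hxn : x + (n + 1) ≠ 0 := by exact_mod_cast hx (n + 1) le_rfl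
    have prod_last : ∏ j ∈ range (n + 2), (x + j)
        = (∏ j ∈ range (n + 1), (x + j)) * (x + (n + 1)) := by
      rw [prod_range_succ]; push_cast; ring
    have prod_first : ∏ j ∈ range (n + 2), (x + j) = x * ∏ j ∈ range (n + 1), (x + 1 + j) := by
      rw [prod_range_succ']; push_cast; simp only [add_assoc, add_comm (1 : K)]; ring
    have shift : ∀ j : ℕ, x + ((j + 1 : ℕ) : K) = x + 1 + j := fun j ↦ by push_cast; ring
    rw [sum_range_succ_alternating_choose_mul]
    simp only [mul_sub, sum_sub_distrib, shift, ← ih x (fun j hj ↦ hx j (by omega)),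
      ← ih (x + 1) hx_succ]
    rw [prod_last, factorial_succ]
    field_simp
    push_cast
    linear_combination (n ! : K) * prod_last.symm.trans prod_first

theorem intervalIntegrable_inv_add_of_pos {c : ℝ} (hc : 0 < c) :
    IntervalIntegrable (fun x ↦ (x + c)⁻¹) volume 0 1 := by
  refine intervalIntegral.intervalIntegrable_inv (fun x hx ↦ ?_) (by fun_prop)
  rw [Set.uIcc_of_le zero_le_one] at hx
  linarith [hx.1]

theorem integral_inv_add_of_pos {c : ℝ} (hc : 0 < c) :
    ∫ x in (0 : ℝ)..1, (x + c)⁻¹ = Real.log (c + 1) - Real.log c := by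
  rw [intervalIntegral.integral_comp_add_right (fun x ↦ x⁻¹), zero_add, add_comm,
    integral_inv_of_pos hc (by linarith), Real.log_div (by linarith) hc.ne']

theorem alternating_binomial_log_eq_integral_general
    (n : ℕ) :
    (∑ i ∈ Finset.Icc 1 (n + 1), ((n + 1).choose i : ℝ) * (-1 : ℝ) ^ i * Real.log i)
      = ∫ x in Set.Ioc (0 : ℝ) 1,
          (1 / x - (n.factorial : ℝ) / ∏ j ∈ Finset.range (n + 1), (x + (j : ℝ))) := by
  have integrand_eq : Set.EqOn
      (fun x : ℝ ↦ 1 / x - (n.factorial : ℝ) / ∏ j ∈ range (n + 1), (x + (j : ℝ)))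
      (fun x ↦ ∑ i ∈ range n, (-1) ^ i * (n.choose (i + 1) : ℝ) * (x + (i + 1 : ℝ))⁻¹)
      (Set.Ioc 0 1) := fun x hx ↦ by
    have := hx.1
    dsimp only
    rw [factorial_div_prod_range_add_eq_sum n x fun j _ ↦ by positivity, sum_range_succ']
    simp [pow_succ, ← sum_neg_distrib]
  -- the added `i = 0` term, and below the `i = 0` term `log 0 - log 1`, vanish as `Real.log 0 = 0`
  have lhs_eq : ∑ i ∈ Icc 1 (n + 1), ((n + 1).choose i : ℝ) * (-1 : ℝ) ^ i * Real.log i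
      = ∑ i ∈ range (n + 2), (-1) ^ i * ((n + 1).choose i : ℝ) * Real.log i := by
    rw [range_eq_Ico, sum_eq_sum_Ico_succ_bot (by omega), ← Ico_add_one_right_eq_Icc]
    simp only [pow_zero, Nat.choose_zero_right, Nat.cast_one, mul_one, CharP.cast_eq_zero,
      Real.log_zero, mul_comm, zero_add]
    rfl
  rw [setIntegral_congr_fun measurableSet_Ioc integrand_eq,
    ← intervalIntegral.integral_of_le zero_le_one, intervalIntegral.integral_finsetSum
      fun i _ ↦ (intervalIntegrable_inv_add_of_pos (Nat.cast_add_one_pos i)).const_mul _]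
  simp only [intervalIntegral.integral_const_mul,
    integral_inv_add_of_pos (Nat.cast_add_one_pos _)]
  rw [lhs_eq, sum_range_succ_alternating_choose_mul, sum_range_succ']
  simp only [Nat.cast_add, Nat.cast_one, pow_zero, Nat.choose_zero_right, mul_one,
    CharP.cast_eq_zero, Real.log_zero, zero_add, Real.log_one, sub_self, mul_zero, add_zero]
  exact sum_congr rfl fun i _ ↦ by ring

/-- For every integer `n ≥ 1`,
`∑_{i=1}^{n+1} C(n+1,i)(−1)^i log i = ∫_{0}^{1} [1/x − n!/(x(x+1)⋯(x+n))] dx`. -/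
theorem alternating_binomial_log_eq_integral
    (n : ℕ) (hn : 1 ≤ n) :
    (∑ i ∈ Finset.Icc 1 (n + 1), ((n + 1).choose i : ℝ) * (-1 : ℝ) ^ i * Real.log i)
      = ∫ x in Set.Ioc (0 : ℝ) 1,
          (1 / x - (n.factorial : ℝ) / ∏ j ∈ Finset.range (n + 1), (x + (j : ℝ))) :=
  alternating_binomial_log_eq_integral_general n
end

section
/- Let S > 0 and let (τ_i)_{i≥1} be independent identically distributed random variables, each exponentially distributed with rate 1. Let N = min{ i ≥ 1 : τ_i ≥ S } (which is almost surely finite) and ν = τ_1 + τ_2 + ⋯ + τ_N. Then E[ν] = e^{S}, and for every real t with t e^{S(1−t)} < 1 and t < 1, E[e^{t ν}] = 1/(1 − t e^{S(1−t)}). -/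
/-!
On `{N = n + 1} = {τ₁, …, τₙ < S ≤ τₙ₊₁}` the integrand `e^{tν}` is a product of functions of
distinct `τᵢ`, so `e^{tν} 1{N ≥ 1}` is a series of such products. By independence the
`n`-th term has expectation `aⁿ b` with `a = E[e^{tτ}; τ < S] = (1 - e^{(t-1)S})/(1-t)` and
`b = E[e^{tτ}; τ ≥ S] = e^{(t-1)S}/(1-t)`, and the geometric series sums to
`b/(1-a) = 1/(1 - t e^{S(1-t)})`. At `t = 0` this says `P(N ≥ 1) = 1`, i.e. `N` is a.s. finite.
For the mean, Wald's decomposition `ν = ∑ⱼ τⱼ₊₁ 1{τ₁, …, τⱼ < S}` gives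
`E[ν] = ∑ⱼ (1 - e^{-S})ʲ = e^S`.
-/

open Filter MeasureTheory ProbabilityTheory Real

open scoped ENNReal

-- `0` when no `i ≥ 1` satisfies `p`, since `sInf ∅ = 0`.
noncomputable def firstPosIndex (p : ℕ → Prop) : ℕ := sInf {i | 1 ≤ i ∧ p i}

section FirstPosIndex

variable {p : ℕ → Prop}

lemma one_le_firstPosIndex {i : ℕ} (hi : 1 ≤ i) (hp : p i) : 1 ≤ firstPosIndex p :=
  (Nat.sInf_mem (s := {i | 1 ≤ i ∧ p i}) ⟨i, hi, hp⟩).1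

lemma firstPosIndex_spec (h : 1 ≤ firstPosIndex p) : p (firstPosIndex p) :=
  (Nat.sInf_mem (Nat.nonempty_of_pos_sInf h)).2

lemma lt_firstPosIndex_iff (h : 1 ≤ firstPosIndex p) {j : ℕ} :
    j < firstPosIndex p ↔ ∀ i ∈ Finset.Icc 1 j, ¬ p i := by
  constructor
  · intro hj i hi hpi
    have : firstPosIndex p ≤ i := Nat.sInf_le ⟨(Finset.mem_Icc.1 hi).1, hpi⟩
    have := (Finset.mem_Icc.1 hi).2
    omega
  · intro hj
    by_contra! hle
    exact hj _ (Finset.mem_Icc.2 ⟨h, hle⟩) (firstPosIndex_spec h)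

lemma firstPosIndex_eq_succ_iff {n : ℕ} :
    firstPosIndex p = n + 1 ↔ (∀ i ∈ Finset.Icc 1 n, ¬ p i) ∧ p (n + 1) := by
  constructor
  · intro h
    have h1 : 1 ≤ firstPosIndex p := by omega
    exact ⟨(lt_firstPosIndex_iff h1).1 (by omega), h ▸ firstPosIndex_spec h1⟩
  · rintro ⟨hlt, hp⟩
    have h1 := one_le_firstPosIndex (by omega) hp
    have : firstPosIndex p ≤ n + 1 := Nat.sInf_le ⟨by omega, hp⟩
    have := (lt_firstPosIndex_iff h1).2 hlt
    omega

variable [DecidablePred p]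

lemma sum_Icc_firstPosIndex_eq_tsum (h : 1 ≤ firstPosIndex p) (f : ℕ → ℝ≥0∞) :
    ∑ i ∈ Finset.Icc 1 (firstPosIndex p), f i
      = ∑' j, (∏ i ∈ Finset.Icc 1 j, if p i then 0 else 1) * f (j + 1) := by
  have hprod : ∀ j, (∏ i ∈ Finset.Icc 1 j, if p i then (0 : ℝ≥0∞) else 1)
      = if j < firstPosIndex p then 1 else 0 := by
    intro j
    split_ifs with hj <;> rw [lt_firstPosIndex_iff h] at hj
    · exact Finset.prod_eq_one fun i hi => if_neg (hj i hi)
    · obtain ⟨i, hi, hpi⟩ := not_forall₂.1 hj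
      exact Finset.prod_eq_zero hi (if_pos (not_not.1 hpi))
  simp_rw [hprod, ite_mul, one_mul, zero_mul]
  rw [tsum_eq_sum (s := Finset.range (firstPosIndex p)) fun j hj => if_neg (by simpa using hj),
    Finset.sum_congr rfl fun j hj => if_pos (Finset.mem_range.1 hj), Finset.range_eq_Ico,
    Finset.sum_Ico_add' f, ← Finset.Ico_add_one_right_eq_Icc]

lemma ite_prod_Icc_firstPosIndex_eq_tsum (g : ℕ → ℝ≥0∞) :
    (if 1 ≤ firstPosIndex p then ∏ i ∈ Finset.Icc 1 (firstPosIndex p), g i else 0)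
      = ∑' n, (∏ i ∈ Finset.Icc 1 n, if p i then 0 else g i)
          * if p (n + 1) then g (n + 1) else 0 := by
  have hterm : ∀ n, (∏ i ∈ Finset.Icc 1 n, if p i then 0 else g i)
      * (if p (n + 1) then g (n + 1) else 0)
      = if firstPosIndex p = n + 1 then ∏ i ∈ Finset.Icc 1 (n + 1), g i else 0 := by
    intro n
    by_cases h : firstPosIndex p = n + 1
    · obtain ⟨hcont, hstop⟩ := firstPosIndex_eq_succ_iff.1 h
      rw [if_pos h, Finset.prod_Icc_succ_top (by omega), if_pos hstop,
        Finset.prod_congr rfl fun i hi => if_neg (hcont i hi)]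
    · rw [if_neg h]
      rcases not_and_or.1 (firstPosIndex_eq_succ_iff.not.1 h) with hcont | hstop
      · obtain ⟨i, hi, hpi⟩ := not_forall₂.1 hcont
        rw [Finset.prod_eq_zero (f := fun i => if p i then 0 else g i) hi (if_pos (not_not.1 hpi)),
          zero_mul]
      · rw [if_neg hstop, mul_zero]
  simp_rw [hterm]
  rcases Nat.eq_zero_or_eq_succ_pred (firstPosIndex p) with h | h
  · simp [h]
  · rw [h]
    simp

end FirstPosIndex

lemma measurable_firstPosIndex {Ω : Type*} [MeasurableSpace Ω] {p : Ω → ℕ → Prop}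
    (hp : ∀ i, MeasurableSet {ω | p ω i}) : Measurable fun ω => firstPosIndex (p ω) := by
  have hsucc : ∀ n, MeasurableSet {ω | firstPosIndex (p ω) = n + 1} := by
    intro n
    simp_rw [firstPosIndex_eq_succ_iff, Set.ofPred_and, Set.ofPred_forall]
    exact (MeasurableSet.biInter (Finset.Icc 1 n).countable_toSet fun i _ => (hp i).compl).inter
      (hp (n + 1))
  refine measurable_to_countable' fun n => ?_
  rcases n with _ | n
  · have hzero : (fun ω => firstPosIndex (p ω)) ⁻¹' {0}
        = (⋃ n, {ω | firstPosIndex (p ω) = n + 1})ᶜ := by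
      ext ω
      simp only [Set.mem_preimage, Set.mem_singleton_iff, Set.mem_compl_iff, Set.mem_iUnion,
        Set.mem_ofPred_eq, not_exists]
      exact ⟨fun h n => by omega,
        fun h => by by_contra h0; exact h (firstPosIndex (p ω) - 1) (by omega)⟩
    rw [hzero]
    exact (MeasurableSet.iUnion hsucc).compl
  · exact hsucc n

lemma indicator_Iio_apply_eq_ite {α M : Type*} [LinearOrder α] [Zero M] {a x : α} (f : α → M) :
    (Set.Iio a).indicator f x = if a ≤ x then 0 else f x := by
  by_cases h : a ≤ x <;> simp [Set.indicator_apply, h]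

lemma ENNReal.tsum_ofReal_pow_mul_ofReal {a : ℝ} (ha : 0 ≤ a) (ha1 : a < 1) (b : ℝ) :
    ∑' n : ℕ, ENNReal.ofReal a ^ n * ENNReal.ofReal b = ENNReal.ofReal (b / (1 - a)) := by
  rw [ENNReal.tsum_mul_right, ENNReal.tsum_geometric, ← ENNReal.ofReal_one,
    ← ENNReal.ofReal_sub _ ha, ← ENNReal.ofReal_inv_of_pos (by linarith),
    ← ENNReal.ofReal_mul (inv_nonneg.2 (by linarith)), div_eq_inv_mul]

lemma lintegral_prod_mul_comp_of_iIndepFun_of_map_eq {Ω β ι : Type*} [MeasurableSpace Ω]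
    {μ : Measure Ω} [MeasurableSpace β] {X : ι → Ω → β} {ρ : Measure β} (hX : ∀ i, Measurable (X i))
    (hindep : iIndepFun X μ) (hlaw : ∀ i, μ.map (X i) = ρ) {f g : β → ℝ≥0∞}
    (hf : Measurable f) (hg : Measurable g) {s : Finset ι} {j : ι} (hj : j ∉ s) :
    ∫⁻ ω, (∏ i ∈ s, f (X i ω)) * g (X j ω) ∂μ = (∫⁻ x, f x ∂ρ) ^ s.card * ∫⁻ x, g x ∂ρ := by
  have hlintegral : ∀ {h : β → ℝ≥0∞}, Measurable h → ∀ i, ∫⁻ ω, h (X i ω) ∂μ = ∫⁻ x, h x ∂ρ :=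
    fun hh i => by rw [← hlaw i, lintegral_map hh (hX i)]
  have hind : IndepFun (fun ω => ∏ i ∈ s, f (X i ω)) (fun ω => g (X j ω)) μ := by
    have := (hindep.indepFun_finset s {j} (Finset.disjoint_singleton_right.2 hj) hX).comp
      (φ := fun x : s → β => ∏ i : s, f (x i))
      (ψ := fun y : ({j} : Finset ι) → β => g (y ⟨j, Finset.mem_singleton_self j⟩))
      (by fun_prop) (by fun_prop)
    convert this using 1
    · funext ω
      exact (Finset.prod_coe_sort s fun i => f (X i ω)).symm
    · rfl
  rw [lintegral_mul_eq_lintegral_mul_lintegral_of_indepFun'' (by fun_prop) (by fun_prop) hind,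
    lintegral_prod_eq_prod_lintegral_of_indepFun s (fun i ω => f (X i ω))
      (hindep.comp (fun _ => f) fun _ => hf) fun i => hf.comp (hX i)]
  simp only [hlintegral hf, hlintegral hg, Finset.prod_const]

lemma lintegral_tsum_prod_Icc_mul_comp_of_iIndepFun_of_map_eq {Ω β : Type*} [MeasurableSpace Ω]
    {μ : Measure Ω} [MeasurableSpace β] {X : ℕ → Ω → β} {ρ : Measure β}
    (hX : ∀ i, Measurable (X i)) (hindep : iIndepFun X μ) (hlaw : ∀ i, μ.map (X i) = ρ)
    {f g : β → ℝ≥0∞} (hf : Measurable f) (hg : Measurable g) :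
    ∫⁻ ω, ∑' n, (∏ i ∈ Finset.Icc 1 n, f (X i ω)) * g (X (n + 1) ω) ∂μ
      = ∑' n, (∫⁻ x, f x ∂ρ) ^ n * ∫⁻ x, g x ∂ρ := by
  rw [lintegral_tsum (f := fun n ω => (∏ i ∈ Finset.Icc 1 n, f (X i ω)) * g (X (n + 1) ω))
    fun n => ((Finset.measurable_prod _ fun i _ => hf.comp (hX i)).mul
      (hg.comp (hX _))).aemeasurable]
  refine tsum_congr fun n => ?_
  rw [lintegral_prod_mul_comp_of_iIndepFun_of_map_eq hX hindep hlaw hf hg (by simp),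
    Nat.card_Icc, add_tsub_cancel_right]

lemma lintegral_expMeasure {r : ℝ} {F : ℝ → ℝ≥0∞} (hF : Measurable F) :
    ∫⁻ x, F x ∂expMeasure r = ∫⁻ x in Set.Ici 0, ENNReal.ofReal (r * exp (-(r * x))) * F x := by
  rw [expMeasure, gammaMeasure, lintegral_withDensity_eq_lintegral_mul (f := gammaPDF 1 r) _
    (measurable_gammaPDFReal 1 r).ennreal_ofReal hF, ← lintegral_indicator measurableSet_Ici]
  congr 1
  ext x
  by_cases hx : 0 ≤ x <;> simp [hx, gammaPDF_eq]

lemma integral_exp_mul {c : ℝ} (hc : c ≠ 0) (a b : ℝ) :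
    ∫ x in a..b, exp (c * x) = (exp (c * b) - exp (c * a)) / c := by
  rw [intervalIntegral.integral_comp_mul_left (fun x => exp x) hc, integral_exp, smul_eq_mul,
    inv_mul_eq_div]

lemma lintegral_indicator_exp_mul_expMeasure_one {A : Set ℝ} (hA : MeasurableSet A) (t : ℝ) :
    ∫⁻ x, A.indicator (fun x => ENNReal.ofReal (exp (t * x))) x ∂expMeasure 1
      = ∫⁻ x in A ∩ Set.Ici 0, ENNReal.ofReal (exp ((t - 1) * x)) := by
  rw [lintegral_expMeasure ((measurable_const_mul t).exp.ennreal_ofReal.indicator hA),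
    ← Measure.restrict_restrict hA, ← lintegral_indicator hA]
  congr 1
  ext x
  by_cases hx : x ∈ A
  · simp only [Set.indicator_of_mem hx, one_mul, ← ENNReal.ofReal_mul (exp_nonneg _), ← exp_add]
    ring_nf
  · simp [hx]

lemma lintegral_indicator_Iio_exp_mul_expMeasure_one {t S : ℝ} (ht : t ≠ 1) (hS : 0 ≤ S) :
    ∫⁻ x, (Set.Iio S).indicator (fun x => ENNReal.ofReal (exp (t * x))) x ∂expMeasure 1
      = ENNReal.ofReal ((1 - exp ((t - 1) * S)) / (1 - t)) := by
  have hc : t - 1 ≠ 0 := sub_ne_zero.2 ht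
  rw [lintegral_indicator_exp_mul_expMeasure_one measurableSet_Iio, Set.Iio_inter_Ici,
    ← ofReal_integral_eq_lintegral_ofReal (f := fun x => exp ((t - 1) * x))
      ((by fun_prop : Continuous fun x => exp ((t - 1) * x)).integrableOn_Icc.mono_set
        Set.Ico_subset_Icc_self)
      (ae_of_all _ fun _ => (exp_pos _).le),
    integral_Ico_eq_integral_Ioc, ← intervalIntegral.integral_of_le hS,
    integral_exp_mul hc, mul_zero, exp_zero, ← neg_sub 1 (exp _), ← neg_sub 1 t, neg_div_neg_eq]

lemma lintegral_indicator_Ici_exp_mul_expMeasure_one {t S : ℝ} (ht : t < 1) (hS : 0 ≤ S) :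
    ∫⁻ x, (Set.Ici S).indicator (fun x => ENNReal.ofReal (exp (t * x))) x ∂expMeasure 1
      = ENNReal.ofReal (exp ((t - 1) * S) / (1 - t)) := by
  have hc : t - 1 < 0 := by linarith
  rw [lintegral_indicator_exp_mul_expMeasure_one measurableSet_Ici,
    Set.inter_eq_left.2 (Set.Ici_subset_Ici.2 hS),
    ← ofReal_integral_eq_lintegral_ofReal
      ((integrableOn_Ici_iff_integrableOn_Ioi).2 (integrableOn_exp_mul_Ioi hc S))
      (ae_of_all _ fun _ => (exp_pos _).le),
    integral_Ici_eq_integral_Ioi, integral_exp_mul_Ioi hc, neg_div, ← div_neg, neg_sub]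

lemma lintegral_ofReal_expMeasure_one : ∫⁻ x, ENNReal.ofReal x ∂expMeasure 1 = 1 := by
  have h21 : (2 : ℝ) - 1 = 1 := by norm_num
  have hGamma : ∫ x in Set.Ioi 0, exp (-x) * x = 1 := by
    simpa [h21] using (Gamma_eq_integral two_pos).symm.trans Gamma_two
  have hint : IntegrableOn (fun x => exp (-x) * x) (Set.Ioi 0) := by
    simpa [h21] using GammaIntegral_convergent two_pos
  rw [lintegral_expMeasure ENNReal.measurable_ofReal, ← setLIntegral_congr Ioi_ae_eq_Ici]
  simp only [one_mul]
  rw [setLIntegral_congr_fun measurableSet_Ioi fun x hx => (ENNReal.ofReal_mul (exp_nonneg _)).symm,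
    ← ofReal_integral_eq_lintegral_ofReal hint
      ((ae_restrict_mem measurableSet_Ioi).mono fun x hx => mul_nonneg (exp_nonneg _) hx.le),
    hGamma, ENNReal.ofReal_one]

lemma ae_nonneg_of_map_eq_expMeasure {Ω : Type*} [MeasurableSpace Ω] {μ : Measure Ω} {X : Ω → ℝ}
    (hX : AEMeasurable X μ) {r : ℝ} (hlaw : μ.map X = expMeasure r) : ∀ᵐ ω ∂μ, 0 ≤ X ω := by
  refine ae_of_ae_map hX ?_
  rw [hlaw, expMeasure, gammaMeasure,
    ae_withDensity_iff (f := gammaPDF 1 r) (measurable_gammaPDFReal 1 r).ennreal_ofReal]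
  exact ae_of_all _ fun x hx => not_lt.1 fun hneg => hx (gammaPDF_of_neg hneg)

lemma ite_exp_mul_sum_Icc_firstPosIndex_eq_tsum (x : ℕ → ℝ) (S t : ℝ) :
    (if 1 ≤ firstPosIndex (S ≤ x ·) then
        ENNReal.ofReal (exp (t * ∑ i ∈ Finset.Icc 1 (firstPosIndex (S ≤ x ·)), x i)) else 0)
      = ∑' n, (∏ i ∈ Finset.Icc 1 n,
          (Set.Iio S).indicator (fun y => ENNReal.ofReal (exp (t * y))) (x i))
        * (Set.Ici S).indicator (fun y => ENNReal.ofReal (exp (t * y))) (x (n + 1)) := by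
  simp only [Finset.mul_sum, exp_sum, ENNReal.ofReal_prod_of_nonneg fun _ _ => (exp_pos _).le]
  convert ite_prod_Icc_firstPosIndex_eq_tsum (p := (S ≤ x ·))
    (fun i => ENNReal.ofReal (exp (t * x i))) using 4
  · exact Finset.prod_congr rfl fun i _ => indicator_Iio_apply_eq_ite _
  · rfl

section RenewalBlock

variable {Ω : Type*} [MeasurableSpace Ω] {μ : Measure Ω} {τ : ℕ → Ω → ℝ} {S : ℝ}

theorem lintegral_ite_exp_mul_sum_Icc_firstPosIndex (hmeas : ∀ i, Measurable (τ i))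
    (hindep : iIndepFun τ μ) (hlaw : ∀ i, μ.map (τ i) = expMeasure 1) (hS : 0 ≤ S)
    {t : ℝ} (ht : t < 1) (htS : t * exp (S * (1 - t)) < 1) :
    ∫⁻ ω, (if 1 ≤ firstPosIndex (S ≤ τ · ω) then
        ENNReal.ofReal (exp (t * ∑ i ∈ Finset.Icc 1 (firstPosIndex (S ≤ τ · ω)), τ i ω)) else 0) ∂μ
      = ENNReal.ofReal (1 / (1 - t * exp (S * (1 - t)))) := by
  have hG : Measurable fun y => ENNReal.ofReal (exp (t * y)) :=
    (measurable_const_mul t).exp.ennreal_ofReal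
  simp only [ite_exp_mul_sum_Icc_firstPosIndex_eq_tsum]
  rw [lintegral_tsum_prod_Icc_mul_comp_of_iIndepFun_of_map_eq hmeas hindep hlaw
      (hG.indicator measurableSet_Iio) (hG.indicator measurableSet_Ici),
    lintegral_indicator_Iio_exp_mul_expMeasure_one ht.ne hS,
    lintegral_indicator_Ici_exp_mul_expMeasure_one ht hS]
  set E := exp ((t - 1) * S)
  have hE : exp (S * (1 - t)) = E⁻¹ := by rw [← exp_neg]; ring_nf
  have hE1 : E ≤ 1 := exp_le_one_iff.2 (by nlinarith)
  have htE : t < E := by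
    rw [hE, mul_inv_lt_iff₀ (exp_pos _), one_mul] at htS
    exact htS
  rw [ENNReal.tsum_ofReal_pow_mul_ofReal (div_nonneg (by linarith) (by linarith))
    ((div_lt_one (by linarith)).2 (by linarith)), hE]
  have h1t : 1 - t ≠ 0 := by linarith
  have hE0 : E ≠ 0 := (exp_pos _).ne'
  congr 1
  rw [one_sub_div h1t, div_div_div_cancel_right₀ h1t, show 1 - t - (1 - E) = E - t by ring,
    ← div_eq_mul_inv, one_sub_div hE0, one_div_div]

theorem ae_one_le_firstPosIndex (hmeas : ∀ i, Measurable (τ i)) (hindep : iIndepFun τ μ)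
    (hlaw : ∀ i, μ.map (τ i) = expMeasure 1) (hS : 0 ≤ S) :
    ∀ᵐ ω ∂μ, 1 ≤ firstPosIndex (S ≤ τ · ω) := by
  have := hindep.isProbabilityMeasure
  have hmass := lintegral_ite_exp_mul_sum_Icc_firstPosIndex hmeas hindep hlaw hS one_pos
    (by simp : (0 : ℝ) * exp (S * (1 - 0)) < 1)
  simp only [zero_mul, exp_zero, ENNReal.ofReal_one, sub_zero, div_one] at hmass
  have hae := ae_eq_of_ae_le_of_lintegral_le (μ := μ) (g := 1)
    (f := fun ω => if 1 ≤ firstPosIndex (S ≤ τ · ω) then 1 else 0)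
    (ae_of_all _ fun ω => by dsimp only [Pi.one_apply]; split_ifs <;> simp) (by simp [hmass])
    aemeasurable_const (by simp [hmass])
  filter_upwards [hae] with ω hω
  by_contra h
  simp [h] at hω

theorem lintegral_ofReal_sum_Icc_firstPosIndex (hmeas : ∀ i, Measurable (τ i))
    (hindep : iIndepFun τ μ) (hlaw : ∀ i, μ.map (τ i) = expMeasure 1) (hS : 0 ≤ S) :
    ∫⁻ ω, ENNReal.ofReal (∑ i ∈ Finset.Icc 1 (firstPosIndex (S ≤ τ · ω)), τ i ω) ∂μ
      = ENNReal.ofReal (exp S) := by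
  have hdecomp : ∀ᵐ ω ∂μ,
      ENNReal.ofReal (∑ i ∈ Finset.Icc 1 (firstPosIndex (S ≤ τ · ω)), τ i ω)
        = ∑' j, (∏ i ∈ Finset.Icc 1 j, (Set.Iio S).indicator 1 (τ i ω))
            * ENNReal.ofReal (τ (j + 1) ω) := by
    filter_upwards [ae_one_le_firstPosIndex hmeas hindep hlaw hS,
      ae_all_iff.2 fun i => ae_nonneg_of_map_eq_expMeasure (hmeas i).aemeasurable (hlaw i)]
      with ω hN hτ
    rw [ENNReal.ofReal_sum_of_nonneg fun i _ => hτ i, sum_Icc_firstPosIndex_eq_tsum hN]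
    exact tsum_congr fun j => congrArg (· * _) <| Finset.prod_congr rfl fun i _ =>
      (indicator_Iio_apply_eq_ite 1).symm
  have hq : ∫⁻ x, (Set.Iio S).indicator 1 x ∂expMeasure 1 = ENNReal.ofReal (1 - exp (-S)) := by
    simpa using lintegral_indicator_Iio_exp_mul_expMeasure_one (t := 0) zero_ne_one hS
  rw [lintegral_congr_ae hdecomp, lintegral_tsum_prod_Icc_mul_comp_of_iIndepFun_of_map_eq hmeas
    hindep hlaw (measurable_one.indicator measurableSet_Iio) ENNReal.measurable_ofReal]
  simp only [hq, lintegral_ofReal_expMeasure_one]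
  rw [← ENNReal.ofReal_one, ENNReal.tsum_ofReal_pow_mul_ofReal
    (sub_nonneg.2 (exp_le_one_iff.2 (by linarith))) (by linarith [exp_pos (-S)]),
    sub_sub_cancel, one_div, exp_neg, inv_inv]

lemma measurable_sum_Icc_firstPosIndex (hmeas : ∀ i, Measurable (τ i)) :
    Measurable fun ω => ∑ i ∈ Finset.Icc 1 (firstPosIndex (S ≤ τ · ω)), τ i ω :=
  (measurable_from_prod_countable_left (f := fun p : Ω × ℕ => ∑ i ∈ Finset.Icc 1 p.2, τ i p.1)
    fun n => Finset.measurable_sum (Finset.Icc 1 n) fun i _ => hmeas i).comp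
    (measurable_id.prodMk (measurable_firstPosIndex fun i => measurableSet_le measurable_const
      (hmeas i)))

theorem integral_sum_Icc_firstPosIndex (hmeas : ∀ i, Measurable (τ i))
    (hindep : iIndepFun τ μ) (hlaw : ∀ i, μ.map (τ i) = expMeasure 1) (hS : 0 ≤ S) :
    ∫ ω, ∑ i ∈ Finset.Icc 1 (firstPosIndex (S ≤ τ · ω)), τ i ω ∂μ = exp S := by
  have hnonneg : ∀ᵐ ω ∂μ, 0 ≤ ∑ i ∈ Finset.Icc 1 (firstPosIndex (S ≤ τ · ω)), τ i ω := by
    filter_upwards [ae_all_iff.2 fun i => ae_nonneg_of_map_eq_expMeasure (hmeas i).aemeasurable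
      (hlaw i)] with ω hτ
    exact Finset.sum_nonneg fun i _ => hτ i
  rw [integral_eq_lintegral_of_nonneg_ae hnonneg
      (measurable_sum_Icc_firstPosIndex hmeas).aestronglyMeasurable,
    lintegral_ofReal_sum_Icc_firstPosIndex hmeas hindep hlaw hS, ENNReal.toReal_ofReal (exp_pos S).le]

theorem integral_exp_mul_sum_Icc_firstPosIndex (hmeas : ∀ i, Measurable (τ i))
    (hindep : iIndepFun τ μ) (hlaw : ∀ i, μ.map (τ i) = expMeasure 1) (hS : 0 ≤ S)
    {t : ℝ} (ht : t < 1) (htS : t * exp (S * (1 - t)) < 1) :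
    ∫ ω, exp (t * ∑ i ∈ Finset.Icc 1 (firstPosIndex (S ≤ τ · ω)), τ i ω) ∂μ
      = 1 / (1 - t * exp (S * (1 - t))) := by
  have hite :
      ∫⁻ ω, ENNReal.ofReal (exp (t * ∑ i ∈ Finset.Icc 1 (firstPosIndex (S ≤ τ · ω)), τ i ω)) ∂μ
        = ∫⁻ ω, (if 1 ≤ firstPosIndex (S ≤ τ · ω) then
          ENNReal.ofReal (exp (t * ∑ i ∈ Finset.Icc 1 (firstPosIndex (S ≤ τ · ω)), τ i ω))
          else 0) ∂μ :=
    lintegral_congr_ae <| (ae_one_le_firstPosIndex hmeas hindep hlaw hS).mono fun ω h =>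
      (if_pos h).symm
  rw [integral_eq_lintegral_of_nonneg_ae (ae_of_all _ fun ω => (exp_pos _).le)
      ((measurable_sum_Icc_firstPosIndex hmeas).const_mul t).exp.aestronglyMeasurable,
    hite, lintegral_ite_exp_mul_sum_Icc_firstPosIndex hmeas hindep hlaw hS ht htS,
    ENNReal.toReal_ofReal (one_div_nonneg.2 (by linarith))]

end RenewalBlock

theorem renewal_block_mean_and_mgf_general
    {Ω : Type*} [MeasurableSpace Ω] (μ : Measure Ω)
    (S : ℝ) (hS : 0 < S)
    (τ : ℕ → Ω → ℝ) (hmeas : ∀ i, Measurable (τ i))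
    (hindep : iIndepFun τ μ)
    (hdist : ∀ i, μ.map (τ i) = expMeasure 1)
    (N : Ω → ℕ) (hN : ∀ ω, N ω = sInf {i : ℕ | 1 ≤ i ∧ S ≤ τ i ω})
    (ν : Ω → ℝ) (hν : ∀ ω, ν ω = ∑ i ∈ Finset.Icc 1 (N ω), τ i ω) :
    (∫ ω, ν ω ∂μ = Real.exp S)
    ∧ ∀ t : ℝ, t < 1 → t * Real.exp (S * (1 - t)) < 1 →
        ∫ ω, Real.exp (t * ν ω) ∂μ = 1 / (1 - t * Real.exp (S * (1 - t))) := by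
  obtain rfl : N = fun ω => firstPosIndex (S ≤ τ · ω) := funext hN
  obtain rfl : ν = fun ω => ∑ i ∈ Finset.Icc 1 (firstPosIndex (S ≤ τ · ω)), τ i ω := funext hν
  exact ⟨integral_sum_Icc_firstPosIndex hmeas hindep hdist hS.le,
    fun t ht htS => integral_exp_mul_sum_Icc_firstPosIndex hmeas hindep hdist hS.le ht htS⟩

/-- Let `S > 0` and `(τ_i)_{i≥1}` be i.i.d. exponential(1) random variables.
Let `N = min{i ≥ 1 : τ_i ≥ S}` and `ν = τ_1 + ⋯ + τ_N`. Then `E[ν] = e^S`, and for every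
real `t` with `t < 1` and `t e^{S(1−t)} < 1`, `E[e^{tν}] = 1/(1 − t e^{S(1−t)})`. -/
theorem renewal_block_mean_and_mgf
    {Ω : Type*} [MeasurableSpace Ω] (μ : Measure Ω) [IsProbabilityMeasure μ]
    (S : ℝ) (hS : 0 < S)
    (τ : ℕ → Ω → ℝ) (hmeas : ∀ i, Measurable (τ i))
    (hindep : iIndepFun τ μ)
    (hdist : ∀ i, μ.map (τ i) = expMeasure 1)
    (N : Ω → ℕ) (hN : ∀ ω, N ω = sInf {i : ℕ | 1 ≤ i ∧ S ≤ τ i ω})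
    (ν : Ω → ℝ) (hν : ∀ ω, ν ω = ∑ i ∈ Finset.Icc 1 (N ω), τ i ω) :
    (∫ ω, ν ω ∂μ = Real.exp S)
    ∧ ∀ t : ℝ, t < 1 → t * Real.exp (S * (1 - t)) < 1 →
        ∫ ω, Real.exp (t * ν ω) ∂μ = 1 / (1 - t * Real.exp (S * (1 - t))) :=
  renewal_block_mean_and_mgf_general μ S hS τ hmeas hindep hdist N hN ν hν
end
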